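/- arXiv:2206.10246 — 6 statements merged into one kernel-verified Lean document; each statement's English description precedes it below -/
import Mathlib

section
/- Let q ≥ 1 be an integer, e(u) = exp(-1/(q u)) for u > 0, r ∈ (0,1), and A, B real with -1 < A < 0. Define L̃(X) = ∫₀^r u^{A + B X} (1 - e(u)^X) du for small X > 0. Then lim_{X → 0⁺} X^{-A-1} L̃(X) = ∫₀^∞ v^A (1 - e(v)) dv, where the improper integral on the right converges. -/
open MeasureTheory Set Filter Topology

/-!
Substituting `u = X v` and using `e(X v)^X = e(v)` gives
`X^{-A-1} L̃(X) = X^{BX} ∫₀^{r/X} v^{A+BX} (1 - e(v)) dv`. Since `0 ≤ 1 - e(v) ≤ min 1 (1/(q v))`,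
`v^c (1 - e(v))` is integrable on `(0, ∞)` for every `c ∈ (-1, 0)`; once `A + BX` lies in a fixed
interval `(a, b) ∋ A` inside `(-1, 0)`, the integrands are dominated by `(v^a + v^b)(1 - e(v))`, so
dominated convergence applies, while `X^{BX} → 1`.
-/

lemma rpow_le_rpow_add_rpow {v a b c : ℝ} (hv : 0 < v) (hac : a ≤ c) (hcb : c ≤ b) :
    v ^ c ≤ v ^ a + v ^ b := by
  rcases le_total v 1 with hv1 | hv1
  · linarith [Real.rpow_le_rpow_of_exponent_ge hv hv1 hac, Real.rpow_nonneg hv.le b]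
  · linarith [Real.rpow_le_rpow_of_exponent_le hv1 hcb, Real.rpow_nonneg hv.le a]

lemma tendsto_rpow_mul_self_nhdsGT_zero (B : ℝ) :
    Tendsto (fun X : ℝ => X ^ (B * X)) (𝓝[>] 0) (𝓝 1) := by
  have hlim : Tendsto (fun X : ℝ => Real.exp (B * (X * Real.log X))) (𝓝[>] 0) (𝓝 1) := by
    have := tendsto_nhdsWithin_of_tendsto_nhds (s := Ioi 0)
      ((Real.continuous_mul_log.tendsto 0).const_mul B)
    simpa [Function.comp_def] using (Real.continuous_exp.tendsto _).comp this
  refine hlim.congr' ?_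
  filter_upwards [self_mem_nhdsWithin] with X (hX : 0 < X)
  rw [Real.rpow_def_of_pos hX]
  ring_nf

lemma abs_one_sub_exp_neg_le_one {x : ℝ} (hx : 0 ≤ x) : |1 - Real.exp (-x)| ≤ 1 := by
  rw [abs_of_nonneg (sub_nonneg.2 (Real.exp_le_one_iff.2 (neg_nonpos.2 hx)))]
  linarith [Real.exp_pos (-x)]

lemma abs_one_sub_exp_neg_le {x : ℝ} (hx : 0 ≤ x) : |1 - Real.exp (-x)| ≤ x := by
  rw [abs_of_nonneg (sub_nonneg.2 (Real.exp_le_one_iff.2 (neg_nonpos.2 hx)))]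
  linarith [Real.one_sub_le_exp_neg x]

lemma integral_Ioo_zero_comp_mul_left {E : Type*} [NormedAddCommGroup E] [NormedSpace ℝ E]
    (g : ℝ → E) {r X : ℝ} (hr : 0 ≤ r) (hX : 0 < X) :
    ∫ v in Ioo 0 (r / X), g (X * v) = X⁻¹ • ∫ u in Ioo 0 r, g u := by
  rw [← integral_Ioc_eq_integral_Ioo, ← integral_Ioc_eq_integral_Ioo,
    ← intervalIntegral.integral_of_le (by positivity), ← intervalIntegral.integral_of_le hr,
    intervalIntegral.integral_comp_mul_left g hX.ne', mul_zero, mul_div_cancel₀ _ hX.ne']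

lemma integrableOn_Ioi_rpow_mul_of_norm_le {f : ℝ → ℝ} {c C : ℝ} (hc : -1 < c) (hc' : c < 0)
    (hf : AEStronglyMeasurable f (volume.restrict (Ioi 0)))
    (hf_one : ∀ v > 0, ‖f v‖ ≤ 1) (hf_inv : ∀ v > 0, ‖f v‖ ≤ C / v) :
    IntegrableOn (fun v => v ^ c * f v) (Ioi 0) := by
  have hmeas : AEStronglyMeasurable (fun v => v ^ c * f v) (volume.restrict (Ioi 0)) :=
    (measurable_id.pow_const c).aestronglyMeasurable.mul hf
  rw [← Ioc_union_Ioi_eq_Ioi zero_le_one]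
  refine IntegrableOn.union ?_ ?_
  · refine (intervalIntegral.intervalIntegrable_rpow' hc).1.mono'
      (hmeas.mono_set Ioc_subset_Ioi_self) ?_
    filter_upwards [ae_restrict_mem measurableSet_Ioc] with v hv
    rw [norm_mul, Real.norm_of_nonneg (Real.rpow_nonneg hv.1.le c)]
    exact mul_le_of_le_one_right (Real.rpow_nonneg hv.1.le c) (hf_one v hv.1)
  · have hint : IntegrableOn (fun v : ℝ => C * v ^ (c - 1)) (Ioi 1) :=
      ((integrableOn_Ioi_rpow_iff zero_lt_one).2 (by linarith)).const_mul C
    refine hint.mono' (hmeas.mono_set (Ioi_subset_Ioi zero_le_one)) ?_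
    filter_upwards [ae_restrict_mem measurableSet_Ioi] with v (hv : 1 < v)
    have hv0 : 0 < v := zero_lt_one.trans hv
    calc ‖v ^ c * f v‖ = v ^ c * ‖f v‖ := by
          rw [norm_mul, Real.norm_of_nonneg (Real.rpow_nonneg hv0.le c)]
      _ ≤ v ^ c * (C / v) := by gcongr; exact hf_inv v hv0
      _ = C * v ^ (c - 1) := by rw [Real.rpow_sub_one hv0.ne']; ring

theorem tendsto_integral_Ioo_rpow_mul {ι : Type*} {l : Filter ι} [l.IsCountablyGenerated]
    {f : ℝ → ℝ} {p R : ι → ℝ} {a b A : ℝ}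
    (hf : AEStronglyMeasurable f (volume.restrict (Ioi 0)))
    (ha : IntegrableOn (fun v => v ^ a * f v) (Ioi 0))
    (hb : IntegrableOn (fun v => v ^ b * f v) (Ioi 0))
    (hA : A ∈ Ioo a b) (hp : Tendsto p l (𝓝 A)) (hR : Tendsto R l atTop) :
    Tendsto (fun i => ∫ v in Ioo 0 (R i), v ^ p i * f v) l (𝓝 (∫ v in Ioi 0, v ^ A * f v)) := by
  have hind : ∀ i, ∫ v in Ioo 0 (R i), v ^ p i * f v
      = ∫ v in Ioi 0, (Ioo 0 (R i)).indicator (fun v => v ^ p i * f v) v := fun i => by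
    rw [integral_indicator measurableSet_Ioo, Measure.restrict_restrict measurableSet_Ioo,
      inter_eq_left.2 Ioo_subset_Ioi_self]
  simp_rw [hind]
  refine tendsto_integral_filter_of_dominated_convergence
    (fun v => ‖v ^ a * f v‖ + ‖v ^ b * f v‖) ?_ ?_ (ha.norm.add hb.norm) ?_
  · exact Eventually.of_forall fun i =>
      ((measurable_id.pow_const (p i)).aestronglyMeasurable.mul hf).indicator measurableSet_Ioo
  · filter_upwards [hp (Ioo_mem_nhds hA.1 hA.2)] with i hi
    filter_upwards [ae_restrict_mem measurableSet_Ioi] with v (hv : 0 < v)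
    calc ‖(Ioo 0 (R i)).indicator (fun v => v ^ p i * f v) v‖ ≤ ‖v ^ p i * f v‖ :=
          norm_indicator_le_norm_self _ _
      _ ≤ (v ^ a + v ^ b) * ‖f v‖ := by
          rw [norm_mul, Real.norm_of_nonneg (Real.rpow_nonneg hv.le _)]
          gcongr
          exact rpow_le_rpow_add_rpow hv hi.1.le hi.2.le
      _ = ‖v ^ a * f v‖ + ‖v ^ b * f v‖ := by
          rw [norm_mul, norm_mul, Real.norm_of_nonneg (Real.rpow_nonneg hv.le _),
            Real.norm_of_nonneg (Real.rpow_nonneg hv.le _), add_mul]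
  · filter_upwards [ae_restrict_mem measurableSet_Ioi] with v (hv : 0 < v)
    refine ((tendsto_const_nhds.rpow hp (Or.inl hv.ne')).mul_const (f v)).congr' ?_
    filter_upwards [hR.eventually_gt_atTop v] with i hi
    exact (indicator_of_mem (show v ∈ Ioo 0 (R i) from ⟨hv, hi⟩) (fun v => v ^ p i * f v)).symm

lemma neg_one_div_mul_eq_neg_inv_div (q v : ℝ) : -1 / (q * v) = -(q⁻¹ / v) := by
  rw [neg_div, ← div_div, one_div]

lemma integrableOn_Ioi_rpow_mul_one_sub_exp {q c : ℝ} (hq : 0 ≤ q) (hc : -1 < c) (hc' : c < 0) :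
    IntegrableOn (fun v => v ^ c * (1 - Real.exp (-1 / (q * v)))) (Ioi 0) := by
  refine integrableOn_Ioi_rpow_mul_of_norm_le (C := q⁻¹) hc hc'
    (by fun_prop : Measurable fun v : ℝ => 1 - Real.exp (-1 / (q * v))).aestronglyMeasurable
    (fun v hv => ?_) (fun v hv => ?_) <;>
  rw [Real.norm_eq_abs, neg_one_div_mul_eq_neg_inv_div]
  exacts [abs_one_sub_exp_neg_le_one (by positivity), abs_one_sub_exp_neg_le (by positivity)]

lemma exp_neg_one_div_mul_mul_rpow (q : ℝ) {X : ℝ} (hX : X ≠ 0) (v : ℝ) :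
    Real.exp (-1 / (q * (X * v))) ^ X = Real.exp (-1 / (q * v)) := by
  rw [← Real.exp_mul, neg_one_div_mul_eq_neg_inv_div, neg_one_div_mul_eq_neg_inv_div,
    ← div_div, div_right_comm, neg_mul, div_mul_cancel₀ _ hX]

lemma integral_Ioo_rpow_mul_one_sub_exp_rpow (q : ℝ) {r X : ℝ} (hr : 0 ≤ r) (hX : 0 < X)
    (c : ℝ) :
    ∫ u in Ioo 0 r, u ^ c * (1 - Real.exp (-1 / (q * u)) ^ X)
      = X ^ (c + 1) * ∫ v in Ioo 0 (r / X), v ^ c * (1 - Real.exp (-1 / (q * v))) := by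
  have h := integral_Ioo_zero_comp_mul_left
    (fun u => u ^ c * (1 - Real.exp (-1 / (q * u)) ^ X)) hr hX
  calc ∫ u in Ioo 0 r, u ^ c * (1 - Real.exp (-1 / (q * u)) ^ X)
      = X * ∫ v in Ioo 0 (r / X), (X * v) ^ c * (1 - Real.exp (-1 / (q * (X * v))) ^ X) := by
        rw [h, smul_eq_mul, mul_inv_cancel_left₀ hX.ne']
    _ = X * ∫ v in Ioo 0 (r / X), X ^ c * (v ^ c * (1 - Real.exp (-1 / (q * v)))) := by
        congr 1
        refine setIntegral_congr_fun measurableSet_Ioo fun v hv => ?_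
        rw [Real.mul_rpow hX.le hv.1.le, exp_neg_one_div_mul_mul_rpow q hX.ne', mul_assoc]
    _ = X ^ (c + 1) * ∫ v in Ioo 0 (r / X), v ^ c * (1 - Real.exp (-1 / (q * v))) := by
        rw [integral_const_mul, Real.rpow_add_one hX.ne']
        ring

theorem stmt6_general (q : ℕ) (r : ℝ) (hr : r ∈ Ioo (0 : ℝ) 1) (A B : ℝ)
    (hA : -1 < A) (hA' : A < 0) :
    IntegrableOn (fun v : ℝ => v ^ A * (1 - Real.exp (-1 / (q * v)))) (Ioi 0) volume ∧
    Tendsto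
      (fun X : ℝ => X ^ (-A - 1) *
        ∫ u in Ioo (0 : ℝ) r, u ^ (A + B * X) * (1 - Real.exp (-1 / (q * u)) ^ X))
      (nhdsWithin 0 (Ioi 0))
      (nhds (∫ v in Ioi (0 : ℝ), v ^ A * (1 - Real.exp (-1 / (q * v))))) := by
  have hq : (0 : ℝ) ≤ q := q.cast_nonneg
  refine ⟨integrableOn_Ioi_rpow_mul_one_sub_exp hq hA hA', ?_⟩
  obtain ⟨a, ha, haA⟩ := exists_between hA
  obtain ⟨b, hAb, hb⟩ := exists_between hA'
  have hp : Tendsto (fun X : ℝ => A + B * X) (𝓝[>] 0) (𝓝 A) :=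
    tendsto_nhdsWithin_of_tendsto_nhds
      (by simpa using (by fun_prop : Continuous fun X : ℝ => A + B * X).tendsto 0)
  have hR : Tendsto (fun X : ℝ => r / X) (𝓝[>] 0) atTop :=
    tendsto_inv_nhdsGT_zero.const_mul_atTop hr.1
  have hlim := (tendsto_rpow_mul_self_nhdsGT_zero B).mul <| tendsto_integral_Ioo_rpow_mul
    (by fun_prop : Measurable fun v : ℝ => 1 - Real.exp (-1 / (q * v))).aestronglyMeasurable
    (integrableOn_Ioi_rpow_mul_one_sub_exp hq ha (haA.trans hA'))
    (integrableOn_Ioi_rpow_mul_one_sub_exp hq (hA.trans hAb) hb) ⟨haA, hAb⟩ hp hR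
  rw [one_mul] at hlim
  refine hlim.congr' ?_
  filter_upwards [self_mem_nhdsWithin] with X (hX : 0 < X)
  rw [integral_Ioo_rpow_mul_one_sub_exp_rpow q hr.1.le hX, ← mul_assoc, ← Real.rpow_add hX]
  ring_nf

/-- For `-1 < A < 0`, `L̃(X) = ∫₀^r u^{A+BX} (1 - e(u)^X) du` with
`e(u) = exp(-1/(q u))` satisfies
`lim_{X → 0⁺} X^{-A-1} L̃(X) = ∫₀^∞ v^A (1 - e(v)) dv`, which converges. -/
theorem stmt6 (q : ℕ) (hq : 1 ≤ q) (r : ℝ) (hr : r ∈ Ioo (0 : ℝ) 1) (A B : ℝ)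
    (hA : -1 < A) (hA' : A < 0) :
    IntegrableOn (fun v : ℝ => v ^ A * (1 - Real.exp (-1 / (q * v)))) (Ioi 0) volume ∧
    Tendsto
      (fun X : ℝ => X ^ (-A - 1) *
        ∫ u in Ioo (0 : ℝ) r, u ^ (A + B * X) * (1 - Real.exp (-1 / (q * u)) ^ X))
      (nhdsWithin 0 (Ioi 0))
      (nhds (∫ v in Ioi (0 : ℝ), v ^ A * (1 - Real.exp (-1 / (q * v))))) :=
  stmt6_general q r hr A B hA hA'
end

section
/- Let q ≥ 1 be an integer, e(u) = exp(-1/(q u)) for u > 0, r ∈ (0,1), B ∈ ℝ. Define L̃(X) = ∫₀^r u^{B X} (1 - e(u)^X) du for small X > 0. Then lim_{X → 0⁺} X^{-1} |log X|^{-1} L̃(X) = 1/q. -/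
open MeasureTheory Set Filter

/-! Near `0` the integrand is bounded by `u ^ (B * X)`, whose integral over `(0, X)` is `O(X)`.
On `[X, r]` the factor `u ^ (B * X)` is `exp (O(X |log X|)) = 1 + o(1)`, and
`c / (u + c) ≤ 1 - exp (-(c / u)) ≤ c / u` with `c = X / q`; both bounds integrate to
`(X / q) |log X| + O(X)`. -/

open Real intervalIntegral Topology

lemma rpow_exp_neg_one_div_mul (q u X : ℝ) : exp (-1 / (q * u)) ^ X = exp (-(X / q / u)) := by
  rw [← exp_mul]
  ring_nf

section Integrand

variable {a c u X r : ℝ}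

lemma one_sub_exp_neg_div_mem_Icc (hc : 0 ≤ c) (hu : 0 ≤ u) :
    1 - exp (-(c / u)) ∈ Icc 0 1 := by
  have : exp (-(c / u)) ≤ 1 := exp_le_one_iff.mpr (neg_nonpos.mpr (div_nonneg hc hu))
  constructor <;> linarith [exp_pos (-(c / u))]

lemma div_add_le_one_sub_exp_neg_div (hc : 0 ≤ c) (hu : 0 < u) :
    c / (u + c) ≤ 1 - exp (-(c / u)) := by
  have h := inv_anti₀ (by positivity) (add_one_le_exp (c / u))
  rw [← exp_neg] at h
  have : 1 - (c / u + 1)⁻¹ = c / (u + c) := by field_simp; ring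
  linarith

lemma abs_mul_log_le_of_mem_Icc (hX : 0 < X) (hu : u ∈ Icc X 1) :
    |a * log u| ≤ |a| * |log X| := by
  rw [abs_mul]
  refine mul_le_mul_of_nonneg_left ?_ (abs_nonneg a)
  rw [abs_of_nonpos (log_nonpos (hX.le.trans hu.1) hu.2),
    abs_of_nonpos (log_nonpos hX.le (hu.1.trans hu.2))]
  exact neg_le_neg (log_le_log hX hu.1)

lemma rpow_mem_Icc_of_mem_Icc (hX : 0 < X) (hu : u ∈ Icc X 1) :
    u ^ a ∈ Icc (exp (-(|a| * |log X|))) (exp (|a| * |log X|)) := by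
  rw [rpow_def_of_pos (hX.trans_le hu.1), mul_comm (log u)]
  obtain ⟨h₁, h₂⟩ := abs_le.mp (abs_mul_log_le_of_mem_Icc (a := a) hX hu)
  exact ⟨exp_le_exp.mpr h₁, exp_le_exp.mpr h₂⟩

lemma continuousOn_rpow_mul_one_sub_exp (hX : 0 < X) :
    ContinuousOn (fun u => u ^ a * (1 - exp (-(c / u)))) (Ici X) := by
  have h₀ : ∀ u ∈ Ici X, u ≠ 0 := fun u hu => (hX.trans_le hu).ne'
  exact (continuousOn_id.rpow_const fun u hu => Or.inl (h₀ u hu)).mul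
    (continuousOn_const.sub ((continuousOn_const.div continuousOn_id h₀).neg.rexp))

lemma intervalIntegrable_rpow_mul_one_sub_exp_of_pos (hX : 0 < X) (hXr : X ≤ r) :
    IntervalIntegrable (fun u => u ^ a * (1 - exp (-(c / u)))) volume X r :=
  (continuousOn_rpow_mul_one_sub_exp hX).mono Icc_subset_Ici_self |>.intervalIntegrable_of_Icc hXr

lemma intervalIntegrable_rpow_mul_one_sub_exp (ha : -1 < a) (hc : 0 ≤ c) (hX : 0 ≤ X) :
    IntervalIntegrable (fun u => u ^ a * (1 - exp (-(c / u)))) volume 0 X := by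
  refine (intervalIntegrable_rpow' ha).mono_fun (by fun_prop) ?_
  rw [uIoc_of_le hX]
  refine (ae_restrict_iff' measurableSet_Ioc).mpr (.of_forall fun u hu => ?_)
  obtain ⟨h₀, h₁⟩ := one_sub_exp_neg_div_mem_Icc hc hu.1.le
  dsimp only
  rw [norm_mul, norm_of_nonneg h₀]
  exact mul_le_of_le_one_right (norm_nonneg _) h₁

lemma integral_rpow_mul_one_sub_exp_le_rpow_div (ha : -1 < a) (hc : 0 ≤ c) (hX : 0 ≤ X) :
    ∫ u in 0..X, u ^ a * (1 - exp (-(c / u))) ≤ X ^ (a + 1) / (a + 1) := by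
  calc ∫ u in 0..X, u ^ a * (1 - exp (-(c / u)))
      ≤ ∫ u in 0..X, u ^ a :=
        integral_mono_on hX (intervalIntegrable_rpow_mul_one_sub_exp ha hc hX)
          (intervalIntegrable_rpow' ha) fun u hu =>
            mul_le_of_le_one_right (rpow_nonneg hu.1 _) (one_sub_exp_neg_div_mem_Icc hc hu.1).2
    _ = X ^ (a + 1) / (a + 1) := by
        rw [integral_rpow (Or.inl ha), zero_rpow (by linarith), sub_zero]

variable {κ : ℝ} (hX : 0 < X) (hXr : X ≤ r) (hc : 0 ≤ c)
include hX hXr hc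

lemma integral_rpow_mul_one_sub_exp_le_mul_log (hκ : ∀ u ∈ Icc X r, u ^ a ≤ κ) :
    ∫ u in X..r, u ^ a * (1 - exp (-(c / u))) ≤ κ * c * (log r - log X) := by
  have hr := hX.trans_le hXr
  calc ∫ u in X..r, u ^ a * (1 - exp (-(c / u)))
      ≤ ∫ u in X..r, κ * c * u⁻¹ := by
        refine integral_mono_on hXr
          (intervalIntegrable_rpow_mul_one_sub_exp_of_pos hX hXr)
          ((continuousOn_const.mul (continuousOn_inv₀.mono fun u hu =>
            (hX.trans_le hu.1).ne')).intervalIntegrable_of_Icc hXr) fun u hu => ?_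
        have hu₀ := hX.trans_le hu.1
        calc u ^ a * (1 - exp (-(c / u)))
            ≤ u ^ a * (c / u) :=
              mul_le_mul_of_nonneg_left (by linarith [one_sub_le_exp_neg (c / u)])
                (rpow_nonneg hu₀.le _)
          _ ≤ κ * (c / u) := mul_le_mul_of_nonneg_right (hκ u hu) (by positivity)
          _ = κ * c * u⁻¹ := by ring
    _ = κ * c * (log r - log X) := by
        rw [intervalIntegral.integral_const_mul, integral_inv_of_pos hX hr, log_div hr.ne' hX.ne']

lemma mul_log_le_integral_rpow_mul_one_sub_exp (hκ : ∀ u ∈ Icc X r, κ ≤ u ^ a) :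
    κ * c * (log (r + c) - log (X + c)) ≤ ∫ u in X..r, u ^ a * (1 - exp (-(c / u))) := by
  have hr := hX.trans_le hXr
  calc κ * c * (log (r + c) - log (X + c))
      = ∫ u in X..r, κ * c * (u + c)⁻¹ := by
        rw [intervalIntegral.integral_const_mul, integral_comp_add_right (fun u => u⁻¹),
          integral_inv_of_pos (by positivity) (by positivity),
          log_div (by positivity) (by positivity)]
    _ ≤ ∫ u in X..r, u ^ a * (1 - exp (-(c / u))) := by
        refine integral_mono_on hXr
          ((continuousOn_const.mul ((continuousOn_id.add continuousOn_const).inv₀ fun u hu =>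
            (add_pos_of_pos_of_nonneg (hX.trans_le hu.1) hc).ne')).intervalIntegrable_of_Icc hXr)
          (intervalIntegrable_rpow_mul_one_sub_exp_of_pos hX hXr) fun u hu => ?_
        have hu₀ := hX.trans_le hu.1
        calc κ * c * (u + c)⁻¹
            = κ * (c / (u + c)) := by ring
          _ ≤ u ^ a * (c / (u + c)) := mul_le_mul_of_nonneg_right (hκ u hu) (by positivity)
          _ ≤ u ^ a * (1 - exp (-(c / u))) :=
              mul_le_mul_of_nonneg_left (div_add_le_one_sub_exp_neg_div hc hu₀)
                (rpow_nonneg hu₀.le _)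

lemma setIntegral_Ioo_rpow_mul_one_sub_exp_eq_add (ha : -1 < a) :
    ∫ u in Ioo 0 r, u ^ a * (1 - exp (-(c / u)))
      = (∫ u in 0..X, u ^ a * (1 - exp (-(c / u))))
        + ∫ u in X..r, u ^ a * (1 - exp (-(c / u))) := by
  rw [integral_add_adjacent_intervals (intervalIntegrable_rpow_mul_one_sub_exp ha hc hX.le)
    (intervalIntegrable_rpow_mul_one_sub_exp_of_pos hX hXr),
    integral_of_le (hX.le.trans hXr), integral_Ioc_eq_integral_Ioo]

lemma setIntegral_Ioo_rpow_mul_one_sub_exp_le (ha : -1 < a)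
    (hκ : ∀ u ∈ Icc X r, u ^ a ≤ κ) :
    ∫ u in Ioo 0 r, u ^ a * (1 - exp (-(c / u)))
      ≤ X ^ (a + 1) / (a + 1) + κ * c * (log r - log X) := by
  rw [setIntegral_Ioo_rpow_mul_one_sub_exp_eq_add hX hXr hc ha]
  exact add_le_add (integral_rpow_mul_one_sub_exp_le_rpow_div ha hc hX.le)
    (integral_rpow_mul_one_sub_exp_le_mul_log hX hXr hc hκ)

lemma le_setIntegral_Ioo_rpow_mul_one_sub_exp (ha : -1 < a)
    (hκ : ∀ u ∈ Icc X r, κ ≤ u ^ a) :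
    κ * c * (log (r + c) - log (X + c)) ≤ ∫ u in Ioo 0 r, u ^ a * (1 - exp (-(c / u))) := by
  rw [setIntegral_Ioo_rpow_mul_one_sub_exp_eq_add hX hXr hc ha]
  exact le_add_of_nonneg_of_le
    (integral_nonneg hX.le fun u hu => mul_nonneg (rpow_nonneg hu.1 _)
      (one_sub_exp_neg_div_mem_Icc hc hu.1).1)
    (mul_log_le_integral_rpow_mul_one_sub_exp hX hXr hc hκ)

end Integrand

section Asymptotics

lemma tendsto_mul_inv_abs_log {g : ℝ → ℝ} {l : ℝ} (hg : Tendsto g (𝓝[>] 0) (𝓝 l)) :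
    Tendsto (fun X => g X * |log X|⁻¹) (𝓝[>] 0) (𝓝 0) := by
  simpa using hg.mul (tendsto_abs_atBot_atTop.comp tendsto_log_nhdsGT_zero).inv_tendsto_atTop

lemma tendsto_abs_mul_abs_log (B : ℝ) :
    Tendsto (fun X => |B * X| * |log X|) (𝓝[>] 0) (𝓝 0) := by
  have h : Continuous fun X => |B| * |X * log X| := by fun_prop
  simpa [abs_mul, mul_assoc] using (h.tendsto 0).mono_left nhdsWithin_le_nhds

lemma tendsto_exp_abs_mul_abs_log (B s : ℝ) :
    Tendsto (fun X => exp (s * (|B * X| * |log X|))) (𝓝[>] 0) (𝓝 1) := by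
  simpa [Function.comp_def] using
    (continuous_exp.tendsto _).comp ((tendsto_abs_mul_abs_log B).const_mul s)

lemma tendsto_rpow_mul_self (B : ℝ) : Tendsto (fun X => X ^ (B * X)) (𝓝[>] 0) (𝓝 1) := by
  have h : Continuous fun X => exp (B * (X * log X)) := by fun_prop
  refine ((h.tendsto 0).mono_left nhdsWithin_le_nhds).congr' ?_ |>.trans (by simp)
  filter_upwards [self_mem_nhdsWithin] with X hX
  rw [rpow_def_of_pos hX]
  ring_nf

lemma eventually_log_eq_neg_abs_log :
    ∀ᶠ X in 𝓝[>] (0 : ℝ), 0 < X ∧ 0 < |log X| ∧ log X = -|log X| :=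
  eventually_of_mem (Ioo_mem_nhdsGT one_pos) fun X hX => by
    have := log_neg hX.1 hX.2
    exact ⟨hX.1, abs_pos.mpr this.ne, by rw [abs_of_neg this, neg_neg]⟩

variable {q r : ℝ} {κ : ℝ → ℝ} (hκ : Tendsto κ (𝓝[>] 0) (𝓝 1))
include hκ

lemma tendsto_upper_bound_div (B : ℝ) :
    Tendsto (fun X => X⁻¹ * |log X|⁻¹ *
        (X ^ (B * X + 1) / (B * X + 1) + κ X * (X / q) * (log r - log X)))
      (𝓝[>] 0) (𝓝 q⁻¹) := by
  have hBX : Tendsto (fun X : ℝ => B * X + 1) (𝓝[>] 0) (𝓝 1) := by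
    simpa using (by fun_prop : Continuous fun X : ℝ => B * X + 1).continuousWithinAt.tendsto
      (x := 0) (s := Ioi 0)
  have h := (tendsto_mul_inv_abs_log ((tendsto_rpow_mul_self B).div hBX one_ne_zero)).add
    (hκ.mul ((tendsto_mul_inv_abs_log (tendsto_const_nhds (x := log r))).const_add 1
      |>.const_mul q⁻¹))
  rw [show (0 : ℝ) + 1 * (q⁻¹ * (1 + 0)) = q⁻¹ by ring] at h
  refine h.congr' ?_
  filter_upwards [eventually_log_eq_neg_abs_log] with X ⟨hX, hl, hlog⟩
  rw [Pi.div_apply, show log r - log X = log r + |log X| by linarith, rpow_add_one hX.ne']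
  field_simp
  ring

lemma tendsto_lower_bound_div (hr : 0 < r) (hq : 0 < q) :
    Tendsto (fun X => X⁻¹ * |log X|⁻¹ *
        (κ X * (X / q) * (log (r + X / q) - log (X + X / q))))
      (𝓝[>] 0) (𝓝 q⁻¹) := by
  have hlog : Tendsto (fun X => log (r + X / q) - log (1 + q⁻¹)) (𝓝[>] 0)
      (𝓝 (log (r + 0 / q) - log (1 + q⁻¹))) :=
    ((((continuous_const.add (continuous_id.div_const q)).continuousAt.log
      (by simpa using hr.ne')).sub continuousAt_const).tendsto).mono_left nhdsWithin_le_nhds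
  have h := hκ.mul (((tendsto_mul_inv_abs_log hlog).const_add 1).const_mul q⁻¹)
  rw [show (1 : ℝ) * (q⁻¹ * (1 + 0)) = q⁻¹ by ring] at h
  refine h.congr' ?_
  filter_upwards [eventually_log_eq_neg_abs_log] with X ⟨hX, hl, hlog⟩
  have hXq : log (X + X / q) = log X + log (1 + q⁻¹) := by
    rw [← log_mul hX.ne' (by positivity)]
    ring_nf
  rw [show log (r + X / q) - log (X + X / q) = log (r + X / q) - log (1 + q⁻¹) + |log X| by
    rw [hXq]; linarith]
  field_simp
  ring

end Asymptotics

/-- Critical case `A = 0`: for `L̃(X) = ∫₀^r u^{BX} (1 - e(u)^X) du` with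
`e(u) = exp(-1/(q u))`, one has `lim_{X → 0⁺} X⁻¹ |log X|⁻¹ L̃(X) = 1/q`. -/
theorem stmt7 (q : ℕ) (hq : 1 ≤ q) (r : ℝ) (hr : r ∈ Ioo (0 : ℝ) 1) (B : ℝ) :
    Tendsto
      (fun X : ℝ => X⁻¹ * |Real.log X|⁻¹ *
        ∫ u in Ioo (0 : ℝ) r, u ^ (B * X) * (1 - Real.exp (-1 / (q * u)) ^ X))
      (nhdsWithin 0 (Ioi 0)) (nhds (1 / q)) := by
  obtain ⟨hr₀, hr₁⟩ := hr
  have hq₀ : (0 : ℝ) < q := by exact_mod_cast hq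
  simp_rw [rpow_exp_neg_one_div_mul, one_div]
  have hsmall : ∀ᶠ X in 𝓝[>] 0, X ∈ Ioo 0 r ∧ -1 < B * X :=
    Eventually.and (Ioo_mem_nhdsGT hr₀) <|
      ((continuous_const_mul B).tendsto' 0 0 (mul_zero B)).mono_left nhdsWithin_le_nhds
        |>.eventually (lt_mem_nhds (by norm_num))
  refine tendsto_of_tendsto_of_tendsto_of_le_of_le'
    (tendsto_lower_bound_div (κ := fun X => exp (-(|B * X| * |log X|)))
      (by simpa using tendsto_exp_abs_mul_abs_log B (-1)) hr₀ hq₀)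
    (tendsto_upper_bound_div (r := r) (κ := fun X => exp (|B * X| * |log X|))
      (by simpa using tendsto_exp_abs_mul_abs_log B 1) B) ?_ ?_
    <;> filter_upwards [hsmall] with X ⟨⟨hX₀, hXr⟩, ha⟩
    <;> refine mul_le_mul_of_nonneg_left ?_ (by positivity)
  · exact le_setIntegral_Ioo_rpow_mul_one_sub_exp hX₀ hXr.le (by positivity) ha
      fun u hu => (rpow_mem_Icc_of_mem_Icc hX₀ ⟨hu.1, hu.2.trans hr₁.le⟩).1
  · exact setIntegral_Ioo_rpow_mul_one_sub_exp_le hX₀ hXr.le (by positivity) ha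
      fun u hu => (rpow_mem_Icc_of_mem_Icc hX₀ ⟨hu.1, hu.2.trans hr₁.le⟩).2
end

section
/- Let q ≥ 1 be an integer, e(v) = exp(-1/(q v)), r ∈ (0,1), B ∈ ℝ, and define L(X) = ∫₀^r u^{-1 + B X} e(u)^X du for small X > 0. Then L(X) = -log X + d₀ + O(X log² X) as X → 0⁺, where d₀ = log r + ∫₀¹ v^{-1} e(v) dv + ∫₁^∞ v^{-1}(e(v) - 1) dv. In particular, lim_{X→0⁺} (L(X) + log X) = d₀. -/
/-!
Substituting `u = X v` turns the integral into `X ^ (B X) * M X`, where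
`M X = ∫₀^{r/X} v ^ (-1 + B X) e(v) dv`. Replacing `v ^ (B X)` by `1` costs `O(X)` on `(0, 1]`,
because `e` vanishes to every order at `0`, and `O(X log² X)` on `[1, r/X]`, where
`|v ^ (B X) - 1| ≤ 2 |B| X log (r/X)`. What remains is
`∫₀¹ v⁻¹ e + log (r/X) + ∫₁^{r/X} v⁻¹ (e - 1)`, and the tail `∫_{r/X}^∞ v⁻¹ (e - 1)` is `O(X)`
because `1 - e(v) ≤ 1/(q v)`. Hence `M X = -log X + d₀ + O(X log² X)`; finally
`X ^ (B X) - 1 = O(X log X)` and `M X = O(log X)` cost another `O(X log² X)`.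
-/

open MeasureTheory Set Filter Asymptotics Real Topology
open scoped Nat

lemma exp_neg_one_div_le_factorial_mul_pow {x : ℝ} (hx : 0 < x) (n : ℕ) :
    exp (-1 / x) ≤ n ! * x ^ n := by
  have h := Real.pow_div_factorial_le_exp _ (inv_pos.2 hx).le n
  rw [inv_pow, div_eq_mul_inv, ← mul_inv] at h
  rw [neg_div, one_div, exp_neg]
  exact inv_le_of_inv_le₀ (by positivity) (by rwa [mul_comm])

lemma one_sub_exp_neg_one_div_le (x : ℝ) : 1 - exp (-1 / x) ≤ 1 / x := by
  linarith [add_one_le_exp (-1 / x), neg_div x 1]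

lemma exp_neg_one_div_le_one {x : ℝ} (hx : 0 ≤ x) : exp (-1 / x) ≤ 1 :=
  exp_le_one_iff.2 (div_nonpos_of_nonpos_of_nonneg (by norm_num) hx)

lemma abs_exp_sub_one_le_mul_exp_abs (t : ℝ) : |exp t - 1| ≤ |t| * exp |t| := by
  rcases le_total 0 t with ht | ht
  · have h := add_one_le_exp (-t)
    rw [abs_of_nonneg ht, abs_of_nonneg (by linarith [one_le_exp ht])]
    nlinarith [exp_pos t, exp_neg t, mul_inv_cancel₀ (exp_pos t).ne']
  · rw [abs_of_nonpos ht, abs_of_nonpos (by linarith [exp_le_one_iff.2 ht])]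
    nlinarith [add_one_le_exp t, one_le_exp (neg_nonneg.2 ht)]

section rpow

variable {v β : ℝ}

lemma abs_rpow_sub_one_le_of_le_one (hv₀ : 0 < v) (hv₁ : v ≤ 1) (hβ : |β| ≤ 1) :
    |v ^ β - 1| ≤ |β| / v ^ 2 := by
  have hlog : -log v ≤ v⁻¹ := by
    linarith [log_le_sub_one_of_pos (inv_pos.2 hv₀), log_inv v]
  have habs : |log v * β| = |β| * -log v := by
    rw [abs_mul, abs_of_nonpos (log_nonpos hv₀.le hv₁), mul_comm]
  have hexp : exp |log v * β| ≤ v⁻¹ := by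
    calc exp |log v * β| ≤ exp (-log v) := by
          rw [habs]
          exact exp_le_exp.2 (mul_le_of_le_one_left (by linarith [log_nonpos hv₀.le hv₁]) hβ)
      _ = v⁻¹ := by rw [exp_neg, exp_log hv₀]
  rw [rpow_def_of_pos hv₀]
  calc |exp (log v * β) - 1| ≤ |log v * β| * exp |log v * β| := abs_exp_sub_one_le_mul_exp_abs _
    _ ≤ (|β| * v⁻¹) * v⁻¹ := by
        rw [habs] at hexp ⊢
        gcongr
    _ = |β| / v ^ 2 := by field_simp

lemma abs_rpow_sub_one_le_of_one_le (hv : 1 ≤ v) (h : |β| * log v ≤ 1) :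
    |v ^ β - 1| ≤ 2 * |β| * log v := by
  have habs : |log v * β| = |β| * log v := by
    rw [abs_mul, abs_of_nonneg (log_nonneg hv), mul_comm]
  rw [rpow_def_of_pos (zero_lt_one.trans_le hv), mul_assoc, ← habs]
  exact abs_exp_sub_one_le (habs ▸ h)

lemma rpow_neg_one_add_sub_inv (hv : 0 < v) : v ^ (-1 + β) - v⁻¹ = (v ^ β - 1) * v⁻¹ := by
  rw [rpow_add hv, rpow_neg_one]; ring

end rpow

section integrand

variable {c β : ℝ}

lemma abs_inv_mul_exp_le (hc : 0 < c) {v : ℝ} (hv : 0 < v) :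
    |v⁻¹ * exp (-1 / (c * v))| ≤ c := by
  have he := exp_neg_one_div_le_factorial_mul_pow (mul_pos hc hv) 1
  rw [abs_of_nonneg (by positivity)]
  calc v⁻¹ * exp (-1 / (c * v)) ≤ v⁻¹ * (1 ! * (c * v) ^ 1) := by gcongr
    _ = c := by field_simp; simp

lemma abs_rpow_sub_inv_mul_exp_le_of_le_one (hc : 0 < c) {v : ℝ} (hv₀ : 0 < v) (hv₁ : v ≤ 1)
    (hβ : |β| ≤ 1) : |(v ^ (-1 + β) - v⁻¹) * exp (-1 / (c * v))| ≤ 6 * c ^ 3 * |β| := by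
  have he := exp_neg_one_div_le_factorial_mul_pow (mul_pos hc hv₀) 3
  rw [rpow_neg_one_add_sub_inv hv₀, abs_mul, abs_mul, abs_of_pos (inv_pos.2 hv₀),
    abs_of_pos (exp_pos _)]
  calc |v ^ β - 1| * v⁻¹ * exp (-1 / (c * v))
      ≤ |β| / v ^ 2 * v⁻¹ * (3 ! * (c * v) ^ 3) := by
        gcongr; exact abs_rpow_sub_one_le_of_le_one hv₀ hv₁ hβ
    _ = 6 * c ^ 3 * |β| := by field_simp; norm_num [Nat.factorial]

lemma abs_rpow_sub_inv_mul_exp_le_of_one_le (hc : 0 ≤ c) {v T : ℝ} (hv : 1 ≤ v) (hvT : v ≤ T)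
    (hβT : |β| * log T ≤ 1) :
    |(v ^ (-1 + β) - v⁻¹) * exp (-1 / (c * v))| ≤ 2 * |β| * log T * v⁻¹ := by
  have hv₀ : 0 < v := one_pos.trans_le hv
  have hlog : log v ≤ log T := log_le_log hv₀ hvT
  rw [rpow_neg_one_add_sub_inv hv₀, abs_mul, abs_mul, abs_of_pos (inv_pos.2 hv₀),
    abs_of_pos (exp_pos _)]
  have hβv : |v ^ β - 1| ≤ 2 * |β| * log T :=
    (abs_rpow_sub_one_le_of_one_le hv (by nlinarith [abs_nonneg β])).trans (by gcongr)
  have hlogT : 0 ≤ log T := (log_nonneg hv).trans hlog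
  calc |v ^ β - 1| * v⁻¹ * exp (-1 / (c * v)) ≤ 2 * |β| * log T * v⁻¹ * 1 := by
        gcongr; exact exp_neg_one_div_le_one (by positivity)
    _ = _ := mul_one _

lemma abs_inv_mul_exp_sub_one_le (hc : 0 < c) {v : ℝ} (hv : 0 < v) :
    |v⁻¹ * (exp (-1 / (c * v)) - 1)| ≤ c⁻¹ * v ^ (-2 : ℝ) := by
  rw [abs_mul, abs_of_pos (inv_pos.2 hv),
    abs_of_nonpos (sub_nonpos.2 (exp_neg_one_div_le_one (by positivity))),
    show (-2 : ℝ) = ((-2 : ℤ) : ℝ) by norm_num, rpow_intCast]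
  calc v⁻¹ * -(exp (-1 / (c * v)) - 1) ≤ v⁻¹ * (1 / (c * v)) := by
        gcongr; linarith [one_sub_exp_neg_one_div_le (c * v)]
    _ = _ := by field_simp

end integrand

section integral

variable {c β T : ℝ}

lemma intervalIntegrable_inv_mul_exp (hc : 0 < c) :
    IntervalIntegrable (fun v => v⁻¹ * exp (-1 / (c * v))) volume 0 1 := by
  refine (intervalIntegrable_const (c := c)).mono_fun'
    (by fun_prop : Measurable _).aestronglyMeasurable ?_
  rw [uIoc_of_le zero_le_one]
  filter_upwards [ae_restrict_mem measurableSet_Ioc] with v hv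
  exact abs_inv_mul_exp_le hc hv.1

lemma intervalIntegrable_rpow_mul_exp (hc : 0 < c) (hβ : |β| ≤ 1) :
    IntervalIntegrable (fun v => v ^ (-1 + β) * exp (-1 / (c * v))) volume 0 1 := by
  refine (intervalIntegrable_const (c := c + 6 * c ^ 3 * |β|)).mono_fun'
    (by fun_prop : Measurable _).aestronglyMeasurable ?_
  rw [uIoc_of_le zero_le_one]
  filter_upwards [ae_restrict_mem measurableSet_Ioc] with v hv
  have hsplit : v ^ (-1 + β) * exp (-1 / (c * v))
      = v⁻¹ * exp (-1 / (c * v)) + (v ^ (-1 + β) - v⁻¹) * exp (-1 / (c * v)) := by ring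
  rw [Real.norm_eq_abs, hsplit]
  exact (abs_add_le _ _).trans (add_le_add (abs_inv_mul_exp_le hc hv.1)
    (abs_rpow_sub_inv_mul_exp_le_of_le_one hc hv.1 hv.2 hβ))

lemma abs_integral_zero_one_rpow_mul_exp_sub_le (hc : 0 < c) (hβ : |β| ≤ 1) :
    |(∫ v in (0 : ℝ)..1, v ^ (-1 + β) * exp (-1 / (c * v))) -
        ∫ v in (0 : ℝ)..1, v⁻¹ * exp (-1 / (c * v))| ≤ 6 * c ^ 3 * |β| := by
  rw [← intervalIntegral.integral_sub (intervalIntegrable_rpow_mul_exp hc hβ)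
    (intervalIntegrable_inv_mul_exp hc), ← Real.norm_eq_abs]
  refine (intervalIntegral.norm_integral_le_of_norm_le_const fun v hv => ?_).trans_eq
    (by rw [sub_zero, abs_one, mul_one])
  rw [uIoc_of_le zero_le_one] at hv
  rw [Real.norm_eq_abs, ← sub_mul]
  exact abs_rpow_sub_inv_mul_exp_le_of_le_one hc hv.1 hv.2 hβ

lemma uIcc_one_subset_Ioi_zero (hT : 1 ≤ T) : uIcc 1 T ⊆ Ioi 0 := fun v hv => by
  rw [uIcc_of_le hT] at hv; exact one_pos.trans_le hv.1

lemma continuousOn_rpow_mul_exp (hc : 0 < c) (β : ℝ) :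
    ContinuousOn (fun v => v ^ (-1 + β) * exp (-1 / (c * v))) (Ioi 0) := fun v (hv : 0 < v) =>
  ((continuousAt_id.rpow_const (Or.inl (ne_of_gt hv))).mul
    (by fun_prop (disch := positivity))).continuousWithinAt

lemma continuousOn_inv_mul_exp (hc : 0 < c) :
    ContinuousOn (fun v => v⁻¹ * exp (-1 / (c * v))) (Ioi 0) := fun v (hv : 0 < v) =>
  ((continuousAt_inv₀ (ne_of_gt hv)).mul (by fun_prop (disch := positivity))).continuousWithinAt

lemma abs_integral_one_rpow_mul_exp_sub_le (hc : 0 < c) (hT : 1 ≤ T) (hβT : |β| * log T ≤ 1) :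
    |(∫ v in (1 : ℝ)..T, v ^ (-1 + β) * exp (-1 / (c * v))) -
        ∫ v in (1 : ℝ)..T, v⁻¹ * exp (-1 / (c * v))| ≤ 2 * |β| * log T ^ 2 := by
  have hsub := uIcc_one_subset_Ioi_zero hT
  rw [← intervalIntegral.integral_sub
    ((continuousOn_rpow_mul_exp hc β).mono hsub).intervalIntegrable
    ((continuousOn_inv_mul_exp hc).mono hsub).intervalIntegrable, ← Real.norm_eq_abs]
  have hbound : ∫ v in (1 : ℝ)..T, 2 * |β| * log T * v⁻¹ = 2 * |β| * log T ^ 2 := by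
    rw [intervalIntegral.integral_const_mul, integral_inv_of_pos one_pos (one_pos.trans_le hT),
      div_one, sq, mul_assoc]
  have hinv : IntervalIntegrable (fun v : ℝ => v⁻¹) volume 1 T :=
    (continuousOn_inv₀.mono fun v hv => ne_of_gt (hsub hv)).intervalIntegrable
  refine (intervalIntegral.norm_integral_le_of_norm_le hT (Eventually.of_forall fun v hv => ?_)
    (hinv.const_mul _)).trans_eq hbound
  rw [Real.norm_eq_abs, ← sub_mul]
  exact abs_rpow_sub_inv_mul_exp_le_of_one_le hc.le hv.1.le hv.2 hβT

lemma integrableOn_Ioi_inv_mul_exp_sub_one (hc : 0 < c) {a : ℝ} (ha : 0 < a) :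
    IntegrableOn (fun v => v⁻¹ * (exp (-1 / (c * v)) - 1)) (Ioi a) := by
  refine ((integrableOn_Ioi_rpow_of_lt (by norm_num : (-2 : ℝ) < -1) ha).const_mul c⁻¹).mono'
    (by fun_prop : Measurable _).aestronglyMeasurable ?_
  filter_upwards [ae_restrict_mem measurableSet_Ioi] with v hv
  exact abs_inv_mul_exp_sub_one_le hc (ha.trans hv)

lemma abs_setIntegral_Ioi_inv_mul_exp_sub_one_le (hc : 0 < c) (hT : 0 < T) :
    |∫ v in Ioi T, v⁻¹ * (exp (-1 / (c * v)) - 1)| ≤ (c * T)⁻¹ := by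
  have hbound : ∫ v in Ioi T, c⁻¹ * v ^ (-2 : ℝ) = (c * T)⁻¹ := by
    rw [integral_const_mul, integral_Ioi_rpow_of_lt (by norm_num) hT]
    norm_num [rpow_neg_one, mul_inv, mul_comm]
  rw [← Real.norm_eq_abs, ← hbound]
  refine norm_integral_le_of_norm_le
    ((integrableOn_Ioi_rpow_of_lt (by norm_num : (-2 : ℝ) < -1) hT).const_mul c⁻¹) ?_
  filter_upwards [ae_restrict_mem measurableSet_Ioi] with v hv
  exact abs_inv_mul_exp_sub_one_le hc (hT.trans hv)

lemma integral_one_inv_mul_exp_eq (hc : 0 < c) (hT : 1 ≤ T) :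
    ∫ v in (1 : ℝ)..T, v⁻¹ * exp (-1 / (c * v)) =
      log T + (∫ v in Ioi 1, v⁻¹ * (exp (-1 / (c * v)) - 1)) -
        ∫ v in Ioi T, v⁻¹ * (exp (-1 / (c * v)) - 1) := by
  have hw := integrableOn_Ioi_inv_mul_exp_sub_one hc one_pos
  have hinv : IntervalIntegrable (fun v : ℝ => v⁻¹) volume 1 T :=
    (continuousOn_inv₀.mono fun v hv =>
      ne_of_gt (uIcc_one_subset_Ioi_zero hT hv)).intervalIntegrable
  have hlog : ∫ v in (1 : ℝ)..T, v⁻¹ = log T := by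
    rw [integral_inv_of_pos one_pos (one_pos.trans_le hT), div_one]
  rw [add_sub_assoc, intervalIntegral.integral_Ioi_sub_Ioi hw hT, ← hlog,
    ← intervalIntegral.integral_add hinv
      ((intervalIntegrable_iff_integrableOn_Ioc_of_le hT).2 (hw.mono_set Ioc_subset_Ioi_self))]
  refine intervalIntegral.integral_congr fun v _ => ?_
  ring

lemma abs_integral_rpow_mul_exp_sub_le (hc : 0 < c) (hT : 1 ≤ T) (hβ : |β| ≤ 1)
    (hβT : |β| * log T ≤ 1) :
    |(∫ v in (0 : ℝ)..T, v ^ (-1 + β) * exp (-1 / (c * v))) -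
        (log T + (∫ v in Ioc 0 1, v⁻¹ * exp (-1 / (c * v))) +
          ∫ v in Ioi 1, v⁻¹ * (exp (-1 / (c * v)) - 1))| ≤
      6 * c ^ 3 * |β| + 2 * |β| * log T ^ 2 + (c * T)⁻¹ := by
  rw [← intervalIntegral.integral_add_adjacent_intervals (intervalIntegrable_rpow_mul_exp hc hβ)
    ((continuousOn_rpow_mul_exp hc β).mono (uIcc_one_subset_Ioi_zero hT)).intervalIntegrable,
    ← intervalIntegral.integral_of_le zero_le_one]
  have hsplit := integral_one_inv_mul_exp_eq hc hT
  set I₀ := ∫ v in (0 : ℝ)..1, v⁻¹ * exp (-1 / (c * v))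
  set I₁ := ∫ v in (1 : ℝ)..T, v⁻¹ * exp (-1 / (c * v))
  set tail := ∫ v in Ioi T, v⁻¹ * (exp (-1 / (c * v)) - 1)
  calc _ = |((∫ v in (0 : ℝ)..1, v ^ (-1 + β) * exp (-1 / (c * v))) - I₀) +
        ((∫ v in (1 : ℝ)..T, v ^ (-1 + β) * exp (-1 / (c * v))) - I₁) - tail| := by
        rw [hsplit]; congr 1; ring
    _ ≤ _ := by
      refine (abs_sub _ _).trans (add_le_add ((abs_add_le _ _).trans (add_le_add
        (abs_integral_zero_one_rpow_mul_exp_sub_le hc hβ)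
        (abs_integral_one_rpow_mul_exp_sub_le hc hT hβT)))
        (abs_setIntegral_Ioi_inv_mul_exp_sub_one_le hc (one_pos.trans_le hT)))

end integral

lemma exp_neg_one_div_mul_pow (c v : ℝ) {X : ℝ} (hX : X ≠ 0) :
    exp (-1 / (c * (X * v))) ^ X = exp (-1 / (c * v)) := by
  rw [← exp_mul, show c * (X * v) = c * v * X by ring, ← div_div, div_mul_cancel₀ _ hX]

lemma setIntegral_Ioo_rpow_mul_exp_pow_eq (c β : ℝ) {r X : ℝ} (hr : 0 ≤ r) (hX : 0 < X) :
    ∫ u in Ioo 0 r, u ^ (-1 + β) * exp (-1 / (c * u)) ^ X =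
      X ^ β * ∫ v in (0 : ℝ)..r / X, v ^ (-1 + β) * exp (-1 / (c * v)) := by
  have hscale := intervalIntegral.smul_integral_comp_mul_left
    (fun u => u ^ (-1 + β) * exp (-1 / (c * u)) ^ X) X (a := 0) (b := r / X)
  rw [mul_zero, mul_div_cancel₀ r hX.ne'] at hscale
  rw [← integral_Ioc_eq_integral_Ioo, ← intervalIntegral.integral_of_le hr, ← hscale,
    ← intervalIntegral.integral_const_mul, smul_eq_mul, ← intervalIntegral.integral_const_mul]
  have hpow : X ^ β = X * X ^ (-1 + β) := by
    rw [mul_comm, ← rpow_add_one hX.ne', neg_add_cancel_comm]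
  refine intervalIntegral.integral_congr fun v hv => ?_
  rw [uIcc_of_le (by positivity)] at hv
  rw [exp_neg_one_div_mul_pow c v hX.ne', mul_rpow hX.le hv.1, hpow]
  ring

lemma tendsto_mul_log_sq_nhdsGT_zero :
    Tendsto (fun X : ℝ => X * log X ^ 2) (𝓝[>] 0) (𝓝 0) := by
  refine (isLittleO_abs_log_rpow_rpow_nhdsGT_zero 2 (by norm_num : (-1 : ℝ) < 0)
    ).tendsto_div_nhds_zero.congr' ?_
  filter_upwards [self_mem_nhdsWithin] with X (hX : 0 < X)
  rw [rpow_two, sq_abs, rpow_neg_one, div_inv_eq_mul, mul_comm]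

lemma isBigO_const_log (d : ℝ) : (fun _ : ℝ => d) =O[𝓝[>] 0] log :=
  (isLittleO_const_left.2 <| Or.inr <|
    tendsto_abs_atBot_atTop.comp tendsto_log_nhdsGT_zero).isBigO

lemma isBigO_self_mul_log_sq : (fun X : ℝ => X) =O[𝓝[>] 0] fun X => X * log X ^ 2 := by
  refine IsBigO.of_bound 1 ?_
  filter_upwards [self_mem_nhdsWithin, tendsto_log_nhdsGT_zero.eventually_le_atBot (-1)]
    with X (hX : 0 < X) hlog
  rw [one_mul, Real.norm_eq_abs, Real.norm_eq_abs, abs_of_pos hX, abs_of_nonneg (by positivity)]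
  exact le_mul_of_one_le_right hX.le (by nlinarith)

lemma isBigO_mul_log_div_sq {r : ℝ} (hr : r ≠ 0) :
    (fun X : ℝ => X * log (r / X) ^ 2) =O[𝓝[>] 0] fun X => X * log X ^ 2 := by
  have hlog : (fun X => log (r / X)) =O[𝓝[>] 0] log := by
    refine ((isBigO_const_log (log r)).sub (isBigO_refl _ _)).congr' ?_ EventuallyEq.rfl
    filter_upwards [self_mem_nhdsWithin] with X (hX : 0 < X)
    rw [log_div hr hX.ne']
  exact (isBigO_refl _ _).mul (hlog.pow 2)

lemma isBigO_rpow_mul_self_sub_one (B : ℝ) :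
    (fun X : ℝ => X ^ (B * X) - 1) =O[𝓝[>] 0] fun X => X * log X := by
  have hsmall : Tendsto (fun X : ℝ => log X * (B * X)) (𝓝[>] 0) (𝓝 0) := by
    have := ((continuous_mul_log.tendsto 0).const_mul B).mono_left (nhdsWithin_le_nhds (s := Ioi 0))
    simp only [zero_mul, mul_zero] at this
    exact this.congr fun X => by ring
  refine IsBigO.of_bound (2 * |B|) ?_
  filter_upwards [self_mem_nhdsWithin, hsmall.eventually (eventually_abs_sub_lt 0 one_pos)]
    with X (hX : 0 < X) hX1
  rw [sub_zero] at hX1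
  rw [Real.norm_eq_abs, Real.norm_eq_abs, rpow_def_of_pos hX]
  refine (abs_exp_sub_one_le hX1.le).trans_eq ?_
  rw [abs_mul, abs_mul, abs_mul]; ring

lemma isBigO_integral_add_log_sub {c r : ℝ} (hc : 0 < c) (hr : 0 < r) (B : ℝ) :
    (fun X : ℝ => (∫ v in (0 : ℝ)..r / X, v ^ (-1 + B * X) * exp (-1 / (c * v))) + log X -
        (log r + (∫ v in Ioc 0 1, v⁻¹ * exp (-1 / (c * v))) +
          ∫ v in Ioi 1, v⁻¹ * (exp (-1 / (c * v)) - 1)))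
      =O[𝓝[>] 0] fun X => X * log X ^ 2 := by
  have hβ : Tendsto (fun X : ℝ => |B * X|) (𝓝[>] 0) (𝓝 0) := by
    simpa using ((continuous_const_mul B).abs.tendsto 0).mono_left nhdsWithin_le_nhds
  have hβT : Tendsto (fun X : ℝ => |B * X| * log (r / X)) (𝓝[>] 0) (𝓝 0) := by
    have h : Tendsto (fun X => |B| * (X * log r - X * log X)) (𝓝 0) (𝓝 0) := by
      simpa using (((continuous_mul_const (log r)).sub continuous_mul_log).tendsto 0).const_mul |B|
    refine (h.mono_left nhdsWithin_le_nhds).congr' ?_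
    filter_upwards [self_mem_nhdsWithin] with X (hX : 0 < X)
    rw [abs_mul, abs_of_pos hX, log_div hr.ne' hX.ne']; ring
  have hF : (fun X : ℝ => (6 * c ^ 3 * |B| + (c * r)⁻¹) * X + 2 * |B| * (X * log (r / X) ^ 2))
      =O[𝓝[>] 0] fun X => X * log X ^ 2 :=
    (isBigO_self_mul_log_sq.const_mul_left _).add ((isBigO_mul_log_div_sq hr.ne').const_mul_left _)
  refine (IsBigO.of_bound 1 ?_).trans hF
  filter_upwards [self_mem_nhdsWithin, nhdsWithin_le_nhds (eventually_lt_nhds hr),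
    hβ.eventually (eventually_le_nhds one_pos), hβT.eventually (eventually_le_nhds one_pos)]
    with X (hX : 0 < X) hXr hβ₁ hβT₁
  have hlog : log X = log r - log (r / X) := by rw [log_div hr.ne' hX.ne']; ring
  rw [one_mul, Real.norm_eq_abs, Real.norm_of_nonneg (by positivity), hlog]
  refine le_of_eq_of_le (congrArg abs (by ring))
    ((abs_integral_rpow_mul_exp_sub_le hc ((one_le_div hX).2 hXr.le) hβ₁ hβT₁).trans_eq ?_)
  rw [abs_mul, abs_of_pos hX]
  field_simp
  ring

theorem isBigO_setIntegral_rpow_mul_exp_pow_sub {c r : ℝ} (hc : 0 < c) (hr : 0 < r) (B : ℝ) :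
    (fun X : ℝ => (∫ u in Ioo 0 r, u ^ (-1 + B * X) * exp (-1 / (c * u)) ^ X) -
        (-log X + (log r + (∫ v in Ioc 0 1, v⁻¹ * exp (-1 / (c * v))) +
          ∫ v in Ioi 1, v⁻¹ * (exp (-1 / (c * v)) - 1))))
      =O[𝓝[>] 0] fun X => X * log X ^ 2 := by
  set d₀ := log r + (∫ v in Ioc 0 1, v⁻¹ * exp (-1 / (c * v))) +
    ∫ v in Ioi 1, v⁻¹ * (exp (-1 / (c * v)) - 1)
  set M := fun X : ℝ => ∫ v in (0 : ℝ)..r / X, v ^ (-1 + B * X) * exp (-1 / (c * v))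
  have hE : (fun X => M X + log X - d₀) =O[𝓝[>] 0] fun X => X * log X ^ 2 :=
    isBigO_integral_add_log_sub hc hr B
  -- `M = E - log + d₀` with `E → 0` and `|log| → ∞`
  have hM : M =O[𝓝[>] 0] log := by
    have hE₁ := (hE.trans_tendsto tendsto_mul_log_sq_nhdsGT_zero).isBigO_one ℝ
    refine (((hE₁.trans (isBigO_const_log 1)).sub (isBigO_refl _ _)).add
      (isBigO_const_log d₀)).congr_left fun X => by ring
  have hprod : (fun X => (X ^ (B * X) - 1) * M X) =O[𝓝[>] 0] fun X => X * log X ^ 2 :=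
    ((isBigO_rpow_mul_self_sub_one B).mul hM).congr_right fun X => by ring
  refine (hprod.add hE).congr' ?_ EventuallyEq.rfl
  filter_upwards [self_mem_nhdsWithin] with X (hX : 0 < X)
  rw [setIntegral_Ioo_rpow_mul_exp_pow_eq c _ hr.le hX]
  ring

/-- Case `A = -1`: with `L(X) = ∫₀^r u^{-1+BX} e(u)^X du`, `e(u) = exp(-1/(q u))`,
one has `L(X) = -log X + d₀ + O(X log² X)` as `X → 0⁺`, where
`d₀ = log r + ∫₀¹ v⁻¹ e(v) dv + ∫₁^∞ v⁻¹ (e(v) - 1) dv`; in particular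
`lim_{X → 0⁺} (L(X) + log X) = d₀`. -/
theorem stmt13 (q : ℕ) (hq : 1 ≤ q) (r : ℝ) (hr : r ∈ Ioo (0 : ℝ) 1) (B : ℝ) :
    (fun X : ℝ =>
        (∫ u in Ioo (0 : ℝ) r, u ^ (-1 + B * X) * Real.exp (-1 / (q * u)) ^ X) -
          (-Real.log X +
            (Real.log r + (∫ v in Ioc (0 : ℝ) 1, v⁻¹ * Real.exp (-1 / (q * v))) +
              ∫ v in Ioi (1 : ℝ), v⁻¹ * (Real.exp (-1 / (q * v)) - 1))))
      =O[nhdsWithin 0 (Ioi 0)] (fun X : ℝ => X * Real.log X ^ 2) ∧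
    Tendsto
      (fun X : ℝ =>
        (∫ u in Ioo (0 : ℝ) r, u ^ (-1 + B * X) * Real.exp (-1 / (q * u)) ^ X) +
          Real.log X)
      (nhdsWithin 0 (Ioi 0))
      (nhds (Real.log r + (∫ v in Ioc (0 : ℝ) 1, v⁻¹ * Real.exp (-1 / (q * v))) +
        ∫ v in Ioi (1 : ℝ), v⁻¹ * (Real.exp (-1 / (q * v)) - 1))) := by
  have hO := isBigO_setIntegral_rpow_mul_exp_pow_sub (Nat.cast_pos.2 hq) hr.1 B
  refine ⟨hO, ?_⟩
  have h := (hO.trans_tendsto tendsto_mul_log_sq_nhdsGT_zero).add_const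
    (log r + (∫ v in Ioc 0 1, v⁻¹ * exp (-1 / (q * v))) +
      ∫ v in Ioi 1, v⁻¹ * (exp (-1 / (q * v)) - 1))
  rw [zero_add] at h
  exact h.congr fun X => by ring
end

section
/- Let a, b, q be integers with 2 ≤ a ≤ b and q even with 2 ≤ q ≤ a, let p > 0, and set f(x,y) = x^a y^b + x^{a-q} y^b exp(-1/|y|^p) (with the exponential term 0 when y = 0). Then for every (x, y) ∈ ℝ² with x, y > 0 and every s with Re(s) ≤ 0, the bound |f(x,y)|^{Re(s)} ≤ x^{a·Re(s)} y^{b·Re(s)} holds; consequently for any nonnegative integers α, β, the integral ∫_V |f(x,y)|^s x^α y^β dx dy over V = [0,r₁]×[0,r₂] converges absolutely and locally uniformly on the half-plane Re(s) > max(-(α+1)/a, -(β+1)/b), and defines a holomorphic function there. -/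
/-!
For `x, y > 0` one has `x^a y^b ≤ f(x, y)`, and `f ≤ 2` on `[0, 1]²`. Hence `|f|^σ x^α y^β` is
dominated by `x^(aσ+α) y^(bσ+β)` when `σ ≤ 0` and by `2^σ x^α y^β` when `σ > 0`, which is
integrable on `V` as soon as `σ > max(-(α+1)/a, -(β+1)/b)`. Writing `|f|^s = exp (s log |f|)`, the
integral is the complex moment generating function of `log |f|` for the measure
`x^α y^β dx dy` on `V`, and such a function is holomorphic on the vertical strip over the
interior of the set of real `σ` for which `exp (σ log |f|)` is integrable.
-/

open MeasureTheory Set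

/-- The smooth function `f(x,y) = x^a y^b + x^{a-q} y^b exp(-1/|y|^p)`, with the
flat exponential term interpreted as `0` at `y = 0`. -/
noncomputable def fC (a b q : ℕ) (p : ℝ) (x y : ℝ) : ℝ :=
  x ^ a * y ^ b + x ^ (a - q) * y ^ b * (if y = 0 then 0 else Real.exp (-1 / |y| ^ p))

open ProbabilityTheory

section WeightedPowerIntegral

variable {Ω : Type*} [MeasurableSpace Ω] {μ : Measure Ω} {f w : Ω → ℝ}

lemma integral_ofReal_cpow_mul_eq_complexMGF (hwm : AEMeasurable w μ)
    (hf : ∀ᵐ ω ∂μ, 0 < f ω) (hw : ∀ᵐ ω ∂μ, 0 ≤ w ω) (s : ℂ) :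
    ∫ ω, (f ω : ℂ) ^ s * w ω ∂μ =
      complexMGF (fun ω => Real.log (f ω)) (μ.withDensity fun ω => (w ω).toNNReal) s := by
  rw [complexMGF, integral_withDensity_eq_integral_smul₀ hwm.real_toNNReal]
  refine integral_congr_ae ?_
  filter_upwards [hf, hw] with ω hfω hwω
  rw [Complex.cpow_def_of_ne_zero (by exact_mod_cast hfω.ne'), ← Complex.ofReal_log hfω.le,
    NNReal.smul_def, Real.coe_toNNReal _ hwω, Complex.real_smul, mul_comm s, mul_comm]

lemma integrable_rpow_mul_iff_mem_integrableExpSet (hwm : AEMeasurable w μ)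
    (hf : ∀ᵐ ω ∂μ, 0 < f ω) (hw : ∀ᵐ ω ∂μ, 0 ≤ w ω) (t : ℝ) :
    Integrable (fun ω => f ω ^ t * w ω) μ ↔
      t ∈ integrableExpSet (fun ω => Real.log (f ω)) (μ.withDensity fun ω => (w ω).toNNReal) := by
  rw [integrableExpSet, mem_ofPred_eq,
    integrable_withDensity_iff_integrable_smul₀ hwm.real_toNNReal]
  refine integrable_congr ?_
  filter_upwards [hf, hw] with ω hfω hwω
  rw [Real.rpow_def_of_pos hfω, NNReal.smul_def, Real.coe_toNNReal _ hwω, smul_eq_mul, mul_comm t,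
    mul_comm]

lemma integrable_ofReal_cpow_mul (hfm : AEMeasurable f μ) (hwm : AEMeasurable w μ)
    (hf : ∀ᵐ ω ∂μ, 0 < f ω) (hw : ∀ᵐ ω ∂μ, 0 ≤ w ω) {s : ℂ}
    (h : Integrable (fun ω => f ω ^ s.re * w ω) μ) :
    Integrable (fun ω => (f ω : ℂ) ^ s * w ω) μ := by
  refine h.mono' ((((Complex.measurable_ofReal.comp_aemeasurable hfm).pow_const s).mul
    (Complex.measurable_ofReal.comp_aemeasurable hwm)).aestronglyMeasurable) ?_
  filter_upwards [hf, hw] with ω hfω hwω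
  rw [norm_mul, Complex.norm_cpow_eq_rpow_re_of_pos hfω, Complex.norm_real,
    Real.norm_of_nonneg hwω]

lemma differentiableOn_integral_ofReal_cpow_mul (hwm : AEMeasurable w μ)
    (hf : ∀ᵐ ω ∂μ, 0 < f ω) (hw : ∀ᵐ ω ∂μ, 0 ≤ w ω) {U : Set ℝ} (hU : IsOpen U)
    (hint : ∀ t ∈ U, Integrable (fun ω => f ω ^ t * w ω) μ) :
    DifferentiableOn ℂ (fun s : ℂ => ∫ ω, (f ω : ℂ) ^ s * w ω ∂μ) {s | s.re ∈ U} := by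
  have hU_sub : U ⊆ interior (integrableExpSet (fun ω => Real.log (f ω))
      (μ.withDensity fun ω => (w ω).toNNReal)) :=
    interior_maximal (fun t ht => (integrable_rpow_mul_iff_mem_integrableExpSet hwm hf hw t).1
      (hint t ht)) hU
  simp_rw [integral_ofReal_cpow_mul_eq_complexMGF hwm hf hw]
  exact differentiableOn_complexMGF.mono fun s hs => hU_sub hs

end WeightedPowerIntegral

lemma integrableOn_rpow_mul_rpow_Ioc_prod {u v : ℝ} (hu : -1 < u) (hv : -1 < v) (r₁ r₂ : ℝ) :
    IntegrableOn (fun z : ℝ × ℝ => z.1 ^ u * z.2 ^ v) (Ioc 0 r₁ ×ˢ Ioc 0 r₂) := by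
  have h := (intervalIntegral.intervalIntegrable_rpow' (a := 0) (b := r₁) hu).1.mul_prod
    (intervalIntegral.intervalIntegrable_rpow' (a := 0) (b := r₂) hv).1
  rwa [Measure.prod_restrict] at h

lemma neg_one_lt_mul_add_of_neg_div_lt {c d t : ℝ} (hc : 0 < c) (h : -(d + 1) / c < t) :
    -1 < c * t + d := by
  rw [div_lt_iff₀ hc] at h
  linarith

section fC

variable {a b q : ℕ} {p x y : ℝ}

lemma flat_term_mem_Icc (p y : ℝ) :
    (if y = 0 then 0 else Real.exp (-1 / |y| ^ p)) ∈ Icc (0 : ℝ) 1 := by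
  split_ifs
  · simp
  · refine ⟨(Real.exp_pos _).le, Real.exp_le_one_iff.2 ?_⟩
    exact div_nonpos_of_nonpos_of_nonneg (by norm_num) (by positivity)

lemma pow_mul_pow_le_fC (hx : 0 ≤ x) (hy : 0 ≤ y) : x ^ a * y ^ b ≤ fC a b q p x y :=
  le_add_of_nonneg_right (mul_nonneg (by positivity) (flat_term_mem_Icc p y).1)

lemma fC_pos (hx : 0 < x) (hy : 0 < y) : 0 < fC a b q p x y :=
  (by positivity : 0 < x ^ a * y ^ b).trans_le (pow_mul_pow_le_fC hx.le hy.le)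

lemma abs_fC_le_two (hx₀ : 0 ≤ x) (hx₁ : x ≤ 1) (hy₀ : 0 ≤ y) (hy₁ : y ≤ 1) :
    |fC a b q p x y| ≤ 2 := by
  rw [abs_of_nonneg ((by positivity : 0 ≤ x ^ a * y ^ b).trans (pow_mul_pow_le_fC hx₀ hy₀)),
    ← one_add_one_eq_two]
  have hxy {k : ℕ} : x ^ k * y ^ b ≤ 1 :=
    mul_le_one₀ (pow_le_one₀ hx₀ hx₁) (by positivity) (pow_le_one₀ hy₀ hy₁)
  exact add_le_add hxy (mul_le_one₀ hxy (flat_term_mem_Icc p y).1 (flat_term_mem_Icc p y).2)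

lemma abs_fC_rpow_le {t : ℝ} (hx : 0 < x) (hy : 0 < y) (ht : t ≤ 0) :
    |fC a b q p x y| ^ t ≤ x ^ ((a : ℝ) * t) * y ^ ((b : ℝ) * t) := by
  rw [abs_of_pos (fC_pos hx hy)]
  calc fC a b q p x y ^ t ≤ (x ^ a * y ^ b) ^ t :=
        Real.rpow_le_rpow_of_nonpos (by positivity) (pow_mul_pow_le_fC hx.le hy.le) ht
    _ = x ^ ((a : ℝ) * t) * y ^ ((b : ℝ) * t) := by
        rw [Real.mul_rpow (by positivity) (by positivity), ← Real.rpow_natCast x,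
          ← Real.rpow_natCast y, ← Real.rpow_mul hx.le, ← Real.rpow_mul hy.le]

lemma measurable_fC : Measurable fun z : ℝ × ℝ => fC a b q p z.1 z.2 := by
  have hflat : Measurable fun y : ℝ => if y = 0 then 0 else Real.exp (-1 / |y| ^ p) :=
    Measurable.ite (measurableSet_singleton 0) measurable_const (by fun_prop)
  unfold fC
  exact (by fun_prop : Measurable fun z : ℝ × ℝ => z.1 ^ a * z.2 ^ b).add
    ((by fun_prop : Measurable fun z : ℝ × ℝ => z.1 ^ (a - q) * z.2 ^ b).mul
      (hflat.comp measurable_snd))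

lemma integrableOn_abs_fC_rpow_mul {r₁ r₂ t : ℝ} (hr₁ : r₁ ≤ 1) (hr₂ : r₂ ≤ 1) (α β : ℕ)
    (hta : -1 < (a : ℝ) * t + α) (htb : -1 < (b : ℝ) * t + β) :
    IntegrableOn (fun z : ℝ × ℝ => |fC a b q p z.1 z.2| ^ t * (z.1 ^ α * z.2 ^ β))
      (Ioc 0 r₁ ×ˢ Ioc 0 r₂) := by
  have hmeas : AEStronglyMeasurable
      (fun z : ℝ × ℝ => |fC a b q p z.1 z.2| ^ t * (z.1 ^ α * z.2 ^ β))
      (volume.restrict (Ioc 0 r₁ ×ˢ Ioc 0 r₂)) :=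
    ((measurable_fC.abs.pow_const t).mul (by fun_prop)).aestronglyMeasurable
  have hW : MeasurableSet (Ioc (0 : ℝ) r₁ ×ˢ Ioc (0 : ℝ) r₂) :=
    measurableSet_Ioc.prod measurableSet_Ioc
  rcases le_or_gt t 0 with ht | ht
  · refine (integrableOn_rpow_mul_rpow_Ioc_prod hta htb r₁ r₂).mono' hmeas ?_
    refine ae_restrict_of_forall_mem hW fun z ⟨⟨hx, _⟩, ⟨hy, _⟩⟩ => ?_
    rw [Real.norm_of_nonneg (by positivity)]
    calc |fC a b q p z.1 z.2| ^ t * (z.1 ^ α * z.2 ^ β)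
        ≤ z.1 ^ ((a : ℝ) * t) * z.2 ^ ((b : ℝ) * t) * (z.1 ^ α * z.2 ^ β) :=
          mul_le_mul_of_nonneg_right (abs_fC_rpow_le hx hy ht) (by positivity)
      _ = z.1 ^ ((a : ℝ) * t + α) * z.2 ^ ((b : ℝ) * t + β) := by
          rw [Real.rpow_add hx, Real.rpow_add hy, Real.rpow_natCast, Real.rpow_natCast]
          ring
  · have hw := integrableOn_rpow_mul_rpow_Ioc_prod (u := α) (v := β)
      (neg_one_lt_zero.trans_le α.cast_nonneg) (neg_one_lt_zero.trans_le β.cast_nonneg) r₁ r₂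
    simp only [Real.rpow_natCast] at hw
    refine (hw.const_mul (2 ^ t)).mono' hmeas ?_
    refine ae_restrict_of_forall_mem hW fun z ⟨⟨hx, hxr⟩, ⟨hy, hyr⟩⟩ => ?_
    rw [Real.norm_of_nonneg (by positivity)]
    exact mul_le_mul_of_nonneg_right (Real.rpow_le_rpow (abs_nonneg _)
      (abs_fC_le_two hx.le (hxr.trans hr₁) hy.le (hyr.trans hr₂)) ht.le) (by positivity)

end fC

theorem stmt14_general (a b q : ℕ) (ha : 2 ≤ a) (hab : a ≤ b) (p : ℝ) (r₁ r₂ : ℝ)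
    (hr₁ : r₁ ∈ Ioo (0 : ℝ) 1) (hr₂ : r₂ ∈ Ioo (0 : ℝ) 1) (α β : ℕ) :
    (∀ x y : ℝ, 0 < x → 0 < y → ∀ s : ℂ, s.re ≤ 0 →
      |fC a b q p x y| ^ s.re ≤ x ^ ((a : ℝ) * s.re) * y ^ ((b : ℝ) * s.re)) ∧
    (∀ s : ℂ, max (-((α : ℝ) + 1) / a) (-((β : ℝ) + 1) / b) < s.re →
      IntegrableOn
        (fun z : ℝ × ℝ =>
          ((|fC a b q p z.1 z.2| : ℝ) : ℂ) ^ s * ((z.1 ^ α * z.2 ^ β : ℝ) : ℂ))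
        (Icc 0 r₁ ×ˢ Icc 0 r₂) volume) ∧
    DifferentiableOn ℂ
      (fun s : ℂ => ∫ z in Icc (0 : ℝ) r₁ ×ˢ Icc (0 : ℝ) r₂,
        ((|fC a b q p z.1 z.2| : ℝ) : ℂ) ^ s * ((z.1 ^ α * z.2 ^ β : ℝ) : ℂ))
      {s : ℂ | max (-((α : ℝ) + 1) / a) (-((β : ℝ) + 1) / b) < s.re} := by
  have ha₀ : (0 : ℝ) < a := by exact_mod_cast (by omega : 0 < a)
  have hb₀ : (0 : ℝ) < b := by exact_mod_cast (by omega : 0 < b)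
  have hV : volume.restrict (Icc 0 r₁ ×ˢ Icc 0 r₂) = volume.restrict (Ioc 0 r₁ ×ˢ Ioc 0 r₂) :=
    Measure.restrict_congr_set (Measure.set_prod_ae_eq Ioc_ae_eq_Icc Ioc_ae_eq_Icc).symm
  have hW : MeasurableSet (Ioc (0 : ℝ) r₁ ×ˢ Ioc (0 : ℝ) r₂) :=
    measurableSet_Ioc.prod measurableSet_Ioc
  have hf : ∀ᵐ z ∂volume.restrict (Ioc 0 r₁ ×ˢ Ioc 0 r₂), 0 < |fC a b q p z.1 z.2| :=
    ae_restrict_of_forall_mem hW fun z ⟨⟨hx, _⟩, ⟨hy, _⟩⟩ => abs_pos_of_pos (fC_pos hx hy)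
  have hw : ∀ᵐ z ∂volume.restrict (Ioc 0 r₁ ×ˢ Ioc 0 r₂), 0 ≤ z.1 ^ α * z.2 ^ β :=
    ae_restrict_of_forall_mem hW fun z ⟨⟨hx, _⟩, ⟨hy, _⟩⟩ => by positivity
  have hint : ∀ t ∈ Ioi (max (-((α : ℝ) + 1) / a) (-((β : ℝ) + 1) / b)),
      IntegrableOn (fun z : ℝ × ℝ => |fC a b q p z.1 z.2| ^ t * (z.1 ^ α * z.2 ^ β))
        (Ioc 0 r₁ ×ˢ Ioc 0 r₂) := fun t ht =>
    integrableOn_abs_fC_rpow_mul hr₁.2.le hr₂.2.le α β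
      (neg_one_lt_mul_add_of_neg_div_lt ha₀ ((le_max_left _ _).trans_lt ht))
      (neg_one_lt_mul_add_of_neg_div_lt hb₀ ((le_max_right _ _).trans_lt ht))
  have hwm : AEMeasurable (fun z : ℝ × ℝ => z.1 ^ α * z.2 ^ β)
      (volume.restrict (Ioc 0 r₁ ×ˢ Ioc 0 r₂)) := by
    fun_prop
  refine ⟨fun x y hx hy s hs => abs_fC_rpow_le hx hy hs, fun s hs => ?_, ?_⟩
  · rw [IntegrableOn, hV]
    exact integrable_ofReal_cpow_mul measurable_fC.abs.aemeasurable hwm hf hw (hint s.re hs)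
  · simp only [hV]
    exact differentiableOn_integral_ofReal_cpow_mul hwm hf hw isOpen_Ioi hint

/-- For `f(x,y) = x^a y^b + x^{a-q} y^b exp(-1/|y|^p)` one has the pointwise bound
`|f(x,y)|^{Re s} ≤ x^{a Re s} y^{b Re s}` for `x, y > 0` and `Re s ≤ 0`; consequently
the local zeta integral `∫_V |f|^s x^α y^β dxdy` over `V = [0,r₁]×[0,r₂]` converges
absolutely on the half-plane `Re s > max(-(α+1)/a, -(β+1)/b)` and defines a
holomorphic function there. -/
theorem stmt14 (a b q : ℕ) (ha : 2 ≤ a) (hab : a ≤ b) (hq : Even q) (hq2 : 2 ≤ q)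
    (hqa : q ≤ a) (p : ℝ) (hp : 0 < p) (r₁ r₂ : ℝ) (hr₁ : r₁ ∈ Ioo (0 : ℝ) 1)
    (hr₂ : r₂ ∈ Ioo (0 : ℝ) 1) (α β : ℕ) :
    (∀ x y : ℝ, 0 < x → 0 < y → ∀ s : ℂ, s.re ≤ 0 →
      |fC a b q p x y| ^ s.re ≤ x ^ ((a : ℝ) * s.re) * y ^ ((b : ℝ) * s.re)) ∧
    (∀ s : ℂ, max (-((α : ℝ) + 1) / a) (-((β : ℝ) + 1) / b) < s.re →
      IntegrableOn
        (fun z : ℝ × ℝ =>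
          ((|fC a b q p z.1 z.2| : ℝ) : ℂ) ^ s * ((z.1 ^ α * z.2 ^ β : ℝ) : ℂ))
        (Icc 0 r₁ ×ˢ Icc 0 r₂) volume) ∧
    DifferentiableOn ℂ
      (fun s : ℂ => ∫ z in Icc (0 : ℝ) r₁ ×ˢ Icc (0 : ℝ) r₂,
        ((|fC a b q p z.1 z.2| : ℝ) : ℂ) ^ s * ((z.1 ^ α * z.2 ^ β : ℝ) : ℂ))
      {s : ℂ | max (-((α : ℝ) + 1) / a) (-((β : ℝ) + 1) / b) < s.re} :=
  stmt14_general a b q ha hab p r₁ r₂ hr₁ hr₂ α β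
end

section
/- Let p, q > 0 with q an even integer, δ > (p+1)/q, and define Ψ(x, y; s) = (1 + x^{-q} exp(-1/|y|^p))^s on the region U = {(x,y) : 0 < x ≤ r₁, 0 ≤ y ≤ r₂, x^q ≥ y^{-qδ} exp(-1/|y|^p)} (excluding the origin), for s ∈ ℂ. Then Ψ(·; s) extends continuously to U ∪ {(0,0)} with value 1 at the origin, and moreover ∂Ψ/∂y(x, y; s) = p s x^{-q} y^{-p-1} exp(-1/|y|^p) Ψ(x, y; s-1) extends continuously to the origin with limit 0. -/
open MeasureTheory Set Filter

/-- The flat function `y ↦ exp(-1/|y|^p)`, vanishing at `y = 0`. -/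
noncomputable def Eflat (p : ℝ) (y : ℝ) : ℝ :=
  if y = 0 then 0 else Real.exp (-1 / |y| ^ p)

/-- `Ψ(x,y;s) = (1 + x^{-q} exp(-1/|y|^p))^s`. -/
noncomputable def PsiFun (p : ℝ) (q : ℕ) (s : ℂ) (z : ℝ × ℝ) : ℂ :=
  ((1 + z.1 ^ (-(q : ℝ)) * Eflat p z.2 : ℝ) : ℂ) ^ s

/-- The region `U₁ = {(x,y) : 0 < x ≤ r₁, 0 ≤ y ≤ r₂, x^q ≥ y^{-qδ} exp(-1/|y|^p)}`. -/
def UReg (p : ℝ) (q : ℕ) (δ r₁ r₂ : ℝ) : Set (ℝ × ℝ) :=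
  {z | 0 < z.1 ∧ z.1 ≤ r₁ ∧ 0 ≤ z.2 ∧ z.2 ≤ r₂ ∧
    Eflat p z.2 ≤ z.1 ^ q * z.2 ^ ((q : ℝ) * δ)}

/-! On `UReg` the defining inequality reads `x^{-q} exp(-1/y^p) ≤ y^{qδ}`, so the base of `Ψ` is
squeezed between `1` and `1 + y^{qδ}`, and the factor `x^{-q} y^{-p-1} exp(-1/y^p)` of `∂Ψ/∂y`
between `0` and `y^{qδ-p-1}`; both exponents are positive because `qδ > p + 1 > 0`. -/

open Topology

section Eflat

variable {p y : ℝ}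

@[simp]
lemma Eflat_zero (p : ℝ) : Eflat p 0 = 0 := if_pos rfl

lemma Eflat_nonneg (p y : ℝ) : 0 ≤ Eflat p y := by
  unfold Eflat
  split_ifs
  exacts [le_rfl, (Real.exp_pos _).le]

lemma Eflat_of_pos (hy : 0 < y) : Eflat p y = Real.exp (-(y ^ p)⁻¹) := by
  simp [Eflat, hy.ne', abs_of_pos hy, neg_div, one_div]

lemma hasDerivAt_Eflat (hy : 0 < y) :
    HasDerivAt (Eflat p) (p * y ^ (-p - 1) * Eflat p y) y := by
  have hyp : 0 < y ^ p := Real.rpow_pos_of_pos hy p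
  have hexp : HasDerivAt (fun t => Real.exp (-(t ^ p)⁻¹))
      (Real.exp (-(y ^ p)⁻¹) * -(-(p * y ^ (p - 1)) / (y ^ p) ^ 2)) y :=
    ((Real.hasDerivAt_rpow_const (Or.inl hy.ne')).inv hyp.ne').neg.exp
  have hpow : y ^ (p - 1) / (y ^ p) ^ 2 = y ^ (-p - 1) := by
    rw [div_eq_iff (pow_pos hyp 2).ne', sq, ← Real.rpow_add hy, ← Real.rpow_add hy]
    ring_nf
  refine (hexp.congr_of_eventuallyEq ?_).congr_deriv ?_
  · filter_upwards [eventually_gt_nhds hy] with t ht using Eflat_of_pos ht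
  · rw [Eflat_of_pos hy, neg_div, neg_neg, mul_div_assoc, hpow]
    ring

lemma one_le_one_add_rpow_mul_Eflat {x : ℝ} (hx : 0 ≤ x) (a : ℝ) :
    1 ≤ 1 + x ^ a * Eflat p y :=
  le_add_of_nonneg_right (mul_nonneg (Real.rpow_nonneg hx a) (Eflat_nonneg p y))

end Eflat

lemma hasDerivAt_PsiFun_snd {p : ℝ} {q : ℕ} (s : ℂ) {x y : ℝ} (hx : 0 ≤ x) (hy : 0 < y) :
    HasDerivAt (fun t => PsiFun p q s (x, t))
      ((p : ℂ) * s * ((x ^ (-(q : ℝ)) * y ^ (-p - 1) * Eflat p y : ℝ) : ℂ) *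
        PsiFun p q (s - 1) (x, y)) y := by
  have hbase : HasDerivAt (fun t => 1 + x ^ (-(q : ℝ)) * Eflat p t)
      (x ^ (-(q : ℝ)) * (p * y ^ (-p - 1) * Eflat p y)) y :=
    ((hasDerivAt_Eflat hy).const_mul _).const_add 1
  have hslit : ((1 + x ^ (-(q : ℝ)) * Eflat p y : ℝ) : ℂ) ∈ Complex.slitPlane :=
    Complex.ofReal_mem_slitPlane.2 (one_pos.trans_le (one_le_one_add_rpow_mul_Eflat hx _))
  refine (((Complex.hasStrictDerivAt_cpow_const (c := s) hslit).hasDerivAt).comp y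
    hbase.ofReal_comp).congr_deriv ?_
  simp only [PsiFun]
  push_cast
  ring

lemma tendsto_snd_rpow_nhdsWithin_zero {a : ℝ} (ha : 0 < a) (S : Set (ℝ × ℝ)) :
    Tendsto (fun z : ℝ × ℝ => z.2 ^ a) (𝓝[S] (0, 0)) (𝓝 0) := by
  have h := (Real.continuousAt_rpow_const 0 a (Or.inr ha.le)).tendsto.comp
    (continuous_snd.tendsto ((0 : ℝ), (0 : ℝ)))
  rw [Real.zero_rpow ha.ne'] at h
  exact h.mono_left nhdsWithin_le_nhds

section UReg

variable {p δ r₁ r₂ : ℝ} {q : ℕ}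

lemma rpow_neg_mul_Eflat_le_of_mem_UReg {z : ℝ × ℝ} (hz : z ∈ UReg p q δ r₁ r₂) :
    z.1 ^ (-(q : ℝ)) * Eflat p z.2 ≤ z.2 ^ ((q : ℝ) * δ) := by
  obtain ⟨hx, -, -, -, hE⟩ := hz
  rwa [Real.rpow_neg hx.le, Real.rpow_natCast, inv_mul_le_iff₀ (pow_pos hx q)]

lemma tendsto_PsiFun_UReg (hqδ : 0 < (q : ℝ) * δ) (s : ℂ) :
    Tendsto (PsiFun p q s) (𝓝[UReg p q δ r₁ r₂] (0, 0)) (𝓝 1) := by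
  have hsmall : Tendsto (fun z : ℝ × ℝ => z.1 ^ (-(q : ℝ)) * Eflat p z.2)
      (𝓝[UReg p q δ r₁ r₂] (0, 0)) (𝓝 0) := by
    refine squeeze_zero' ?_ ?_ (tendsto_snd_rpow_nhdsWithin_zero hqδ _)
    · filter_upwards [self_mem_nhdsWithin] with z hz
      exact mul_nonneg (Real.rpow_nonneg hz.1.le _) (Eflat_nonneg p z.2)
    · filter_upwards [self_mem_nhdsWithin] with z hz
      exact rpow_neg_mul_Eflat_le_of_mem_UReg hz
  have hcpow : ContinuousAt (fun r : ℝ => (r : ℂ) ^ s) 1 :=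
    (continuousAt_cpow_const (by simp)).comp Complex.continuous_ofReal.continuousAt
  have hbase := hsmall.const_add 1
  rw [add_zero] at hbase
  have h := hcpow.tendsto.comp hbase
  rwa [Complex.ofReal_one, Complex.one_cpow] at h

lemma rpow_neg_mul_rpow_mul_Eflat_le_of_mem_UReg {z : ℝ × ℝ} (hz : z ∈ UReg p q δ r₁ r₂) :
    z.1 ^ (-(q : ℝ)) * z.2 ^ (-p - 1) * Eflat p z.2 ≤ z.2 ^ ((q : ℝ) * δ - p - 1) := by
  rcases hz.2.2.1.eq_or_lt with hy | hy
  · rw [← hy, Eflat_zero, mul_zero]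
    exact Real.rpow_nonneg le_rfl _
  · calc z.1 ^ (-(q : ℝ)) * z.2 ^ (-p - 1) * Eflat p z.2
        = z.1 ^ (-(q : ℝ)) * Eflat p z.2 * z.2 ^ (-p - 1) := by ring
      _ ≤ z.2 ^ ((q : ℝ) * δ) * z.2 ^ (-p - 1) :=
        mul_le_mul_of_nonneg_right (rpow_neg_mul_Eflat_le_of_mem_UReg hz) (by positivity)
      _ = z.2 ^ ((q : ℝ) * δ - p - 1) := by rw [← Real.rpow_add hy]; ring_nf

lemma tendsto_rpow_neg_mul_rpow_mul_Eflat_UReg (hqδ : p + 1 < (q : ℝ) * δ) :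
    Tendsto (fun z : ℝ × ℝ => z.1 ^ (-(q : ℝ)) * z.2 ^ (-p - 1) * Eflat p z.2)
      (𝓝[UReg p q δ r₁ r₂] (0, 0)) (𝓝 0) := by
  have hexp : 0 < (q : ℝ) * δ - p - 1 := by linarith
  refine squeeze_zero' ?_ ?_ (tendsto_snd_rpow_nhdsWithin_zero hexp _)
  · filter_upwards [self_mem_nhdsWithin] with z hz
    exact mul_nonneg (mul_nonneg (Real.rpow_nonneg hz.1.le _) (Real.rpow_nonneg hz.2.2.1 _))
      (Eflat_nonneg p z.2)
  · filter_upwards [self_mem_nhdsWithin] with z hz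
    exact rpow_neg_mul_rpow_mul_Eflat_le_of_mem_UReg hz

end UReg

theorem stmt15_general (p : ℝ) (hp : 0 < p) (q : ℕ) (hq0 : 0 < q)
    (δ r₁ r₂ : ℝ) (hδ : (p + 1) / q < δ) (s : ℂ) :
    Tendsto (fun z : ℝ × ℝ => PsiFun p q s z)
      (nhdsWithin (0, 0) (UReg p q δ r₁ r₂)) (nhds 1) ∧
    (∀ z ∈ UReg p q δ r₁ r₂, 0 < z.2 →
      HasDerivAt (fun y : ℝ => PsiFun p q s (z.1, y))
        ((p : ℂ) * s * ((z.1 ^ (-(q : ℝ)) * z.2 ^ (-p - 1) * Eflat p z.2 : ℝ) : ℂ) *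
          PsiFun p q (s - 1) z) z.2) ∧
    Tendsto
      (fun z : ℝ × ℝ =>
        (p : ℂ) * s * ((z.1 ^ (-(q : ℝ)) * z.2 ^ (-p - 1) * Eflat p z.2 : ℝ) : ℂ) *
          PsiFun p q (s - 1) z)
      (nhdsWithin (0, 0) (UReg p q δ r₁ r₂)) (nhds 0) := by
  have hqδ : p + 1 < (q : ℝ) * δ := by
    rwa [div_lt_iff₀' (by exact_mod_cast hq0)] at hδ
  refine ⟨tendsto_PsiFun_UReg (by linarith) s,
    fun z hz hy => hasDerivAt_PsiFun_snd s hz.1.le hy, ?_⟩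
  simpa using ((tendsto_const_nhds (x := (p : ℂ) * s)).mul
    (tendsto_rpow_neg_mul_rpow_mul_Eflat_UReg hqδ).ofReal).mul
      (tendsto_PsiFun_UReg (by linarith) (s - 1))

/-- On `U₁` with `δ > (p+1)/q`, the function `Ψ(·;s)` extends continuously to the
origin with value `1`; moreover its `y`-derivative is
`p s x^{-q} y^{-p-1} exp(-1/|y|^p) Ψ(x,y;s-1)`, and this extends continuously to
the origin with limit `0`. -/
theorem stmt15 (p : ℝ) (hp : 0 < p) (q : ℕ) (hq : Even q) (hq0 : 0 < q)
    (δ r₁ r₂ : ℝ) (hδ : (p + 1) / q < δ) (hr₁ : 0 < r₁) (hr₂ : 0 < r₂) (s : ℂ) :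
    Tendsto (fun z : ℝ × ℝ => PsiFun p q s z)
      (nhdsWithin (0, 0) (UReg p q δ r₁ r₂)) (nhds 1) ∧
    (∀ z ∈ UReg p q δ r₁ r₂, 0 < z.2 →
      HasDerivAt (fun y : ℝ => PsiFun p q s (z.1, y))
        ((p : ℂ) * s * ((z.1 ^ (-(q : ℝ)) * z.2 ^ (-p - 1) * Eflat p z.2 : ℝ) : ℂ) *
          PsiFun p q (s - 1) z) z.2) ∧
    Tendsto
      (fun z : ℝ × ℝ =>
        (p : ℂ) * s * ((z.1 ^ (-(q : ℝ)) * z.2 ^ (-p - 1) * Eflat p z.2 : ℝ) : ℂ) *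
          PsiFun p q (s - 1) z)
      (nhdsWithin (0, 0) (UReg p q δ r₁ r₂)) (nhds 0) :=
  stmt15_general p hp q hq0 δ r₁ r₂ hδ s
end

section
/- Let a, b, q be integers with 2 ≤ a ≤ b and q even, 2 ≤ q ≤ a, let p > 0, and V = [0,r₁]×[0,r₂] ⊂ ℝ² with r₁, r₂ ∈ (0,1) and r₂ sufficiently small. Fix δ > 0 and λ ∈ (0,1), and set e(y) = exp(-1/(q y^p))... Consider J₁(σ) = ∫₀^{ρ(λ r₁)} (∫₀^{e(y)/λ} x^{(a-q)σ} y^{bσ+β} e(y)^{qσ} dx) dy, where β is a nonnegative integer with β > b/a - 1 and ρ is the partial inverse of e capped at r₂. Then J₁(σ) = (λ^{-(X - qX/a + q/a)} / (X - qX/a + q/a)) ∫₀^{ρ(λ r₁)} y^{-b/a + β + bX/a} e(y)^X dy with X = aσ + 1, and the limit lim_{σ → -1/a⁺} J₁(σ) exists and is finite. -/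
/-!
For `-1/a < σ < 0` the exponent `(a-q)σ` of `x` exceeds `-1`, so the inner integral is
`λ^{-E} E⁻¹ (e(y))^E` with `E = (a-q)σ + 1 = X - qX/a + q/a`; combined with `e(y)^{qσ}` this gives
the factor `e(y)^X`. As `σ ↓ -1/a` the integrand `y^{bσ+β} e(y)^X` is dominated by
`y^{-b/a+β}` on `(0, ρ(λ r₁)] ⊆ (0, 1)`, which is integrable because `-b/a + β > -1`, while the
prefactor converges since `E → q/a ≠ 0`.
-/

open MeasureTheory Set Filter

/-- The flat function `e_{p,q}(y) = exp(-1/(q y^p))` for `y > 0`, and `0` for `y ≤ 0`. -/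
noncomputable def epq (p : ℝ) (q : ℕ) (y : ℝ) : ℝ :=
  if y ≤ 0 then 0 else Real.exp (-1 / (q * y ^ p))

/-- The partial inverse of `e_{p,q}`, capped at `r₂`:
`ρ(x) = e_{p,q}⁻¹(x) = (q(-log x))^{-1/p}` for `0 < x < e_{p,q}(r₂)`, `ρ(x) = r₂`
for `x ≥ e_{p,q}(r₂)`, and `ρ(x) = 0` for `x ≤ 0`. -/
noncomputable def rhoInv (p : ℝ) (q : ℕ) (r₂ : ℝ) (x : ℝ) : ℝ :=
  if x ≤ 0 then 0
  else if x < epq p q r₂ then ((q : ℝ) * (-Real.log x)) ^ (-1 / p) else r₂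

/-- The integral
`J₁(σ) = ∫₀^{ρ(λ r₁)} ∫₀^{e(y)/λ} x^{(a-q)σ} y^{bσ+β} e(y)^{qσ} dx dy`. -/
noncomputable def J1 (a b q : ℕ) (p : ℝ) (lam r₁ r₂ : ℝ) (β : ℕ) (σ : ℝ) : ℝ :=
  ∫ y in (0 : ℝ)..(rhoInv p q r₂ (lam * r₁)),
    ∫ x in (0 : ℝ)..(epq p q y / lam),
      x ^ (((a : ℝ) - q) * σ) * y ^ ((b : ℝ) * σ + β) * epq p q y ^ ((q : ℝ) * σ)

open Topology

lemma epq_pos {p : ℝ} {q : ℕ} {y : ℝ} (hy : 0 < y) : 0 < epq p q y := by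
  rw [epq, if_neg hy.not_ge]
  exact Real.exp_pos _

lemma epq_le_one (p : ℝ) (q : ℕ) (y : ℝ) : epq p q y ≤ 1 := by
  unfold epq
  split_ifs with hy
  · exact zero_le_one
  · have : 0 ≤ (q : ℝ) * y ^ p := by
      have := Real.rpow_pos_of_pos (not_le.1 hy) p
      positivity
    exact Real.exp_le_one_iff.2 (div_nonpos_of_nonpos_of_nonneg (by norm_num) this)

lemma measurable_epq (p : ℝ) (q : ℕ) : Measurable (epq p q) :=
  Measurable.ite measurableSet_Iic measurable_const (by fun_prop)

lemma rhoInv_nonneg (p : ℝ) (q : ℕ) {r₂ : ℝ} (hr₂ : 0 ≤ r₂) (x : ℝ) : 0 ≤ rhoInv p q r₂ x := by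
  unfold rhoInv
  split_ifs with hx0 hx
  · exact le_rfl
  · have hx1 : x < 1 := hx.trans_le (epq_le_one p q r₂)
    have : 0 ≤ -Real.log x := neg_nonneg.2 (Real.log_nonpos (not_le.1 hx0).le hx1.le)
    positivity
  · exact hr₂

lemma rhoInv_le {p : ℝ} (hp : 0 < p) {q : ℕ} (hq : 0 < q) {r₂ : ℝ} (hr₂ : 0 < r₂) (x : ℝ) :
    rhoInv p q r₂ x ≤ r₂ := by
  unfold rhoInv
  split_ifs with hx0 hx
  · exact hr₂.le
  · have hq' : (0 : ℝ) < q := by exact_mod_cast hq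
    have hr₂p : 0 < r₂ ^ p := Real.rpow_pos_of_pos hr₂ p
    have hlog : 1 / (q * r₂ ^ p) < -Real.log x := by
      have := Real.log_lt_log (not_le.1 hx0) hx
      rw [epq, if_neg hr₂.not_ge, Real.log_exp, neg_div] at this
      linarith
    have hbase : r₂ ^ (-p) ≤ q * -Real.log x := by
      rw [Real.rpow_neg hr₂.le, ← one_div]
      calc 1 / r₂ ^ p = q * (1 / (q * r₂ ^ p)) := by field_simp
        _ ≤ q * -Real.log x := by gcongr
    calc ((q : ℝ) * -Real.log x) ^ (-1 / p)
        ≤ (r₂ ^ (-p)) ^ (-1 / p) :=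
          Real.rpow_le_rpow_of_nonpos (Real.rpow_pos_of_pos hr₂ _) hbase
            (div_nonpos_of_nonpos_of_nonneg (by norm_num) hp.le)
      _ = r₂ := by
          rw [← Real.rpow_mul hr₂.le, show -p * (-1 / p) = 1 by field_simp, Real.rpow_one]
  · exact le_rfl

lemma integral_rpow_zero_div {s : ℝ} (hs : -1 < s) {c lam : ℝ} (hc : 0 ≤ c) (hlam : 0 < lam) :
    ∫ x in (0 : ℝ)..c / lam, x ^ s = lam ^ (-(s + 1)) / (s + 1) * c ^ (s + 1) := by
  have hs' : s + 1 ≠ 0 := by linarith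
  rw [integral_rpow (Or.inl hs), Real.zero_rpow hs', sub_zero, Real.div_rpow hc hlam.le,
    Real.rpow_neg hlam.le]
  ring

lemma J1_eq {a b q : ℕ} {p lam r₁ r₂ : ℝ} (hlam : 0 < lam) (hr₂ : 0 ≤ r₂) (β : ℕ) {σ : ℝ}
    (hσ : -1 < ((a : ℝ) - q) * σ) :
    J1 a b q p lam r₁ r₂ β σ =
      lam ^ (-(((a : ℝ) - q) * σ + 1)) / (((a : ℝ) - q) * σ + 1) *
        ∫ y in (0 : ℝ)..rhoInv p q r₂ (lam * r₁),
          y ^ ((b : ℝ) * σ + β) * epq p q y ^ ((a : ℝ) * σ + 1) := by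
  rw [J1, ← intervalIntegral.integral_const_mul]
  refine intervalIntegral.integral_congr_ae (ae_of_all _ fun y hy => ?_)
  rw [uIoc_of_le (rhoInv_nonneg p q hr₂ _)] at hy
  have he := epq_pos (p := p) (q := q) hy.1
  have hsplit : epq p q y ^ ((a : ℝ) * σ + 1)
      = epq p q y ^ ((q : ℝ) * σ) * epq p q y ^ (((a : ℝ) - q) * σ + 1) := by
    rw [← Real.rpow_add he]
    ring_nf
  rw [intervalIntegral.integral_mul_const, intervalIntegral.integral_mul_const,
    integral_rpow_zero_div hσ he.le hlam, hsplit]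
  ring

lemma tendsto_integral_rpow_mul_rpow {ι : Type*} {l : Filter ι} [l.IsCountablyGenerated]
    {g : ℝ → ℝ} (hg : Measurable g) (hg_pos : ∀ y, 0 < y → 0 < g y) (hg_le : ∀ y, g y ≤ 1)
    {R : ℝ} (hR0 : 0 ≤ R) (hR1 : R ≤ 1) {s t : ι → ℝ} {s₀ t₀ : ℝ} (hs₀ : -1 < s₀)
    (hs : Tendsto s l (𝓝 s₀)) (ht : Tendsto t l (𝓝 t₀))
    (hs_ge : ∀ᶠ i in l, s₀ ≤ s i) (ht_nonneg : ∀ᶠ i in l, 0 ≤ t i) :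
    Tendsto (fun i => ∫ y in (0 : ℝ)..R, y ^ s i * g y ^ t i) l
      (𝓝 (∫ y in (0 : ℝ)..R, y ^ s₀ * g y ^ t₀)) := by
  refine intervalIntegral.tendsto_integral_filter_of_dominated_convergence (fun y => y ^ s₀)
    (Eventually.of_forall fun i => ?_) ?_ (intervalIntegral.intervalIntegrable_rpow' hs₀)
    (ae_of_all _ fun y hy => ?_)
  · exact ((measurable_id.pow_const _).mul (hg.pow_const _)).aestronglyMeasurable
  · filter_upwards [hs_ge, ht_nonneg] with i hsi hti
    refine ae_of_all _ fun y hy => ?_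
    rw [uIoc_of_le hR0] at hy
    have hy1 : y ≤ 1 := hy.2.trans hR1
    have hgy := (hg_pos y hy.1).le
    rw [Real.norm_of_nonneg (mul_nonneg (Real.rpow_nonneg hy.1.le _) (Real.rpow_nonneg hgy _))]
    calc y ^ s i * g y ^ t i ≤ y ^ s₀ * 1 :=
          mul_le_mul (Real.rpow_le_rpow_of_exponent_ge hy.1 hy1 hsi)
            (Real.rpow_le_one hgy (hg_le y) hti) (Real.rpow_nonneg hgy _)
            (Real.rpow_nonneg hy.1.le _)
      _ = y ^ s₀ := mul_one _
  · rw [uIoc_of_le hR0] at hy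
    exact ((Real.continuousAt_const_rpow hy.1.ne').tendsto.comp hs).mul
      ((Real.continuousAt_const_rpow (hg_pos y hy.1).ne').tendsto.comp ht)

lemma J1_eq_of_mem_Ioo {a b q : ℕ} (ha : 0 < a) (hqa : q ≤ a) {p lam r₁ r₂ : ℝ} (hlam : 0 < lam)
    (hr₂ : 0 ≤ r₂) (β : ℕ) {σ : ℝ} (hσ : σ ∈ Ioo (-1 / (a : ℝ)) 0) :
    J1 a b q p lam r₁ r₂ β σ =
      lam ^ (-(((a : ℝ) - q) * σ + 1)) / (((a : ℝ) - q) * σ + 1) *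
        ∫ y in (0 : ℝ)..rhoInv p q r₂ (lam * r₁),
          y ^ ((b : ℝ) * σ + β) * epq p q y ^ ((a : ℝ) * σ + 1) := by
  have haσ : -1 < (a : ℝ) * σ := (div_lt_iff₀' (by exact_mod_cast ha)).1 hσ.1
  have hqa' : (q : ℝ) ≤ a := by exact_mod_cast hqa
  exact J1_eq hlam hr₂ β (by nlinarith [hσ.2])

lemma exists_tendsto_J1 {a b q : ℕ} (ha : 0 < a) (hq : 0 < q) (hqa : q ≤ a) {p : ℝ} (hp : 0 < p)
    {lam r₁ r₂ : ℝ} (hlam : 0 < lam) (hr₂ : r₂ ∈ Ioo (0 : ℝ) 1) {β : ℕ}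
    (hβ : (b : ℝ) / a - 1 < β) :
    ∃ L : ℝ, Tendsto (fun σ => J1 a b q p lam r₁ r₂ β σ) (𝓝[Ioo (-1 / (a : ℝ)) 0] (-1 / (a : ℝ)))
      (𝓝 L) := by
  have ha' : (0 : ℝ) < a := by exact_mod_cast ha
  have hprefactor : ContinuousAt
      (fun σ : ℝ => lam ^ (-(((a : ℝ) - q) * σ + 1)) / (((a : ℝ) - q) * σ + 1)) (-1 / (a : ℝ)) := by
    refine ((Real.continuousAt_const_rpow hlam.ne').comp (by fun_prop)).div (by fun_prop) ?_
    have : ((a : ℝ) - q) * (-1 / a) + 1 = q / a := by field_simp; ring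
    rw [this]
    positivity
  have hs₀ : -1 < (b : ℝ) * (-1 / a) + β := by
    have : (b : ℝ) * (-1 / a) = -(b / a) := by ring
    linarith
  have hintegral := tendsto_integral_rpow_mul_rpow (l := 𝓝[Ioo (-1 / (a : ℝ)) 0] (-1 / (a : ℝ)))
    (measurable_epq p q) (fun _ => epq_pos) (epq_le_one p q)
    (rhoInv_nonneg p q hr₂.1.le (lam * r₁)) ((rhoInv_le hp hq hr₂.1 (lam * r₁)).trans hr₂.2.le)
    (s := fun σ => (b : ℝ) * σ + β) (t := fun σ => (a : ℝ) * σ + 1) hs₀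
    ((Continuous.tendsto (by fun_prop) _).mono_left nhdsWithin_le_nhds)
    ((Continuous.tendsto (by fun_prop) _).mono_left nhdsWithin_le_nhds)
    (eventually_nhdsWithin_of_forall fun σ hσ => by gcongr; exact hσ.1.le)
    (eventually_nhdsWithin_of_forall fun σ hσ => by
      linarith [(div_lt_iff₀' ha').1 hσ.1])
  exact ⟨_, ((hprefactor.tendsto.mono_left nhdsWithin_le_nhds).mul hintegral).congr'
    (eventually_nhdsWithin_of_forall fun σ hσ =>
      (J1_eq_of_mem_Ioo ha hqa hlam hr₂.1.le β hσ).symm)⟩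

theorem stmt18_general (a b q : ℕ) (ha : 2 ≤ a) (hq2 : 2 ≤ q)
    (hqa : q ≤ a) (p : ℝ) (hp : 0 < p) (r₁ r₂ : ℝ)
    (hr₂ : r₂ ∈ Ioo (0 : ℝ) 1) (lam : ℝ)
    (hlam : lam ∈ Ioo (0 : ℝ) 1) (β : ℕ) (hβ : (b : ℝ) / a - 1 < β) :
    (∀ σ ∈ Ioo (-1 / (a : ℝ)) 0,
      J1 a b q p lam r₁ r₂ β σ =
        lam ^ (-(((a : ℝ) * σ + 1) - q * ((a : ℝ) * σ + 1) / a + q / a)) /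
            (((a : ℝ) * σ + 1) - q * ((a : ℝ) * σ + 1) / a + q / a) *
          ∫ y in (0 : ℝ)..(rhoInv p q r₂ (lam * r₁)),
            y ^ (-(b : ℝ) / a + β + b * ((a : ℝ) * σ + 1) / a) *
              epq p q y ^ ((a : ℝ) * σ + 1)) ∧
    ∃ L : ℝ, Tendsto (fun σ => J1 a b q p lam r₁ r₂ β σ)
      (nhdsWithin (-1 / (a : ℝ)) (Ioo (-1 / (a : ℝ)) 0)) (nhds L) := by
  have ha0 : 0 < a := by omega
  refine ⟨fun σ hσ => ?_, exists_tendsto_J1 ha0 (by omega) hqa hp hlam.1 hr₂ hβ⟩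
  have hE : ((a : ℝ) * σ + 1) - q * ((a : ℝ) * σ + 1) / a + q / a = ((a : ℝ) - q) * σ + 1 := by
    field_simp
    ring
  have hs : -(b : ℝ) / a + β + b * ((a : ℝ) * σ + 1) / a = (b : ℝ) * σ + β := by
    field_simp
    ring
  rw [hE, hs]
  exact J1_eq_of_mem_Ioo ha0 hqa hlam.1 hr₂.1.le β hσ

/-- For `β > b/a - 1`, the integral `J₁(σ)` has the closed form
`J₁(σ) = λ^{-(X - qX/a + q/a)}/(X - qX/a + q/a) ∫₀^{ρ(λ r₁)} y^{-b/a+β+bX/a} e(y)^X dy`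
with `X = aσ + 1`, and the limit `lim_{σ → -1/a⁺} J₁(σ)` exists and is finite. -/
theorem stmt18 (a b q : ℕ) (ha : 2 ≤ a) (hab : a ≤ b) (hq : Even q) (hq2 : 2 ≤ q)
    (hqa : q ≤ a) (p : ℝ) (hp : 0 < p) (r₁ r₂ : ℝ) (hr₁ : r₁ ∈ Ioo (0 : ℝ) 1)
    (hr₂ : r₂ ∈ Ioo (0 : ℝ) 1) (δ : ℝ) (hδ : 0 < δ) (lam : ℝ)
    (hlam : lam ∈ Ioo (0 : ℝ) 1) (β : ℕ) (hβ : (b : ℝ) / a - 1 < β) :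
    (∀ σ ∈ Ioo (-1 / (a : ℝ)) 0,
      J1 a b q p lam r₁ r₂ β σ =
        lam ^ (-(((a : ℝ) * σ + 1) - q * ((a : ℝ) * σ + 1) / a + q / a)) /
            (((a : ℝ) * σ + 1) - q * ((a : ℝ) * σ + 1) / a + q / a) *
          ∫ y in (0 : ℝ)..(rhoInv p q r₂ (lam * r₁)),
            y ^ (-(b : ℝ) / a + β + b * ((a : ℝ) * σ + 1) / a) *
              epq p q y ^ ((a : ℝ) * σ + 1)) ∧
    ∃ L : ℝ, Tendsto (fun σ => J1 a b q p lam r₁ r₂ β σ)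
      (nhdsWithin (-1 / (a : ℝ)) (Ioo (-1 / (a : ℝ)) 0)) (nhds L) :=
  stmt18_general a b q ha hq2 hqa p hp r₁ r₂ hr₂ lam hlam β hβ
end
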